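/- arXiv:0905.2644 — 4 statements merged into one kernel-verified Lean document; each statement's English description precedes it below -/
import Mathlib

section
/- For every positive integer k, there exists a finite digraph D with stability number exactly k such that for every collection of k−1 directed paths P₁, …, P_{k−1} in D, the subdigraph of D induced on the vertices lying on none of these paths still has stability number k. -/
/-!
By Folkman's theorem there is a finite graph `H` without `(k + 1)`-cliques in which every
`k`-colouring of the vertices has a monochromatic `k`-clique. It comes from the Nešetřil–Rödl
partite construction: starting from `K_N × K_k`, amalgamate copies of the current graph along the
combinatorial lines of a Hales–Jewett cube over one column at a time (this creates no larger
cliques), until every colouring admits a copy of `K_N × K_k` with monochromatic columns; for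
`N = |κ|(k - 1) + 1` a diagonal through `k` equally coloured columns is the monochromatic clique.

Order `V(H)` linearly, take `k` layers `V(H) × {c}` and put an arc `(u, c) → (v, d)` whenever
`u < v`, except between `H`-adjacent vertices of the same layer. A stable set either lies in one
column `{u} × Fin k` or projects injectively onto a clique of `H`, so it has at most `k` vertices.
A directed path is strictly increasing in `u`, so `k - 1` paths leave a free layer `c u` in every
column; a `c`-monochromatic `k`-clique `s` of `H` gives the stable set `{(u, c u) | u ∈ s}`,
which avoids all the paths.
-/

open Function Combinatorics Finset

namespace Combinatorics.Line

variable {α ι : Type*}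

instance [Finite α] [Finite ι] : Finite (Line α ι) :=
  Finite.of_injective idxFun fun l l' h => by cases l; cases l'; congr

lemma apply_injective (l : Line α ι) : Injective l := fun a b h => by
  obtain ⟨i, hi⟩ := l.proper
  simpa only [l.apply_none _ _ hi] using congrFun h i

end Combinatorics.Line

noncomputable section

namespace SimpleGraph.Coloring

variable {V X : Type} {G : SimpleGraph V} (col : G.Coloring X) (x : X) (ι : Type)

/-- One copy of `G` for every combinatorial line `l` of the cube `ι → col.colorClass x`: the
colour class `x` is spread along `l`, every other vertex `v` becomes `(l, v)`. -/
abbrev AmalgamVertex : Type :=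
  (ι → col.colorClass x) ⊕ (Line (col.colorClass x) ι × ↥(col.colorClass x)ᶜ)

open scoped Classical in
def lineEmbedding (l : Line (col.colorClass x) ι) : V ↪ col.AmalgamVertex x ι where
  toFun v := if h : v ∈ col.colorClass x then .inl (l ⟨v, h⟩) else .inr (l, ⟨v, h⟩)
  inj' v v' hvv' := by
    dsimp only at hvv'
    split_ifs at hvv' with h h'
    · exact congrArg Subtype.val (l.apply_injective (Sum.inl.inj hvv'))
    · exact congrArg Subtype.val (Prod.ext_iff.1 (Sum.inr.inj hvv')).2

def amalgam : SimpleGraph (col.AmalgamVertex x ι) :=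
  ⨆ l, G.map (col.lineEmbedding x ι l)

variable {col x ι}

lemma lineEmbedding_of_mem {v : V} (h : v ∈ col.colorClass x)
    (l : Line (col.colorClass x) ι) :
    col.lineEmbedding x ι l v = .inl (l ⟨v, h⟩) := by
  exact dif_pos h

lemma lineEmbedding_of_notMem {v : V} (h : v ∉ col.colorClass x)
    (l : Line (col.colorClass x) ι) :
    col.lineEmbedding x ι l v = .inr (l, ⟨v, h⟩) := by
  exact dif_neg h

lemma mem_colorClass_of_lineEmbedding_eq_inl {l : Line (col.colorClass x) ι} {v : V}
    {w : ι → col.colorClass x} (h : col.lineEmbedding x ι l v = .inl w) :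
    v ∈ col.colorClass x := by
  by_contra hv
  simp [lineEmbedding_of_notMem hv] at h

lemma eq_of_lineEmbedding_eq_inr {l l' : Line (col.colorClass x) ι} {v : V}
    {u : ↥(col.colorClass x)ᶜ} (h : col.lineEmbedding x ι l v = .inr (l', u)) : l = l' := by
  by_cases hv : v ∈ col.colorClass x
  · simp [lineEmbedding_of_mem hv] at h
  · simp only [lineEmbedding_of_notMem hv, Sum.inr.injEq, Prod.mk.injEq] at h
    exact h.1

lemma amalgam_adj {p q : col.AmalgamVertex x ι} :
    (col.amalgam x ι).Adj p q ↔ ∃ l v w, G.Adj v w ∧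
      col.lineEmbedding x ι l v = p ∧ col.lineEmbedding x ι l w = q := by
  simp [amalgam]

lemma not_amalgam_adj_inl_inl (w w' : ι → col.colorClass x) :
    ¬ (col.amalgam x ι).Adj (.inl w) (.inl w') := by
  rw [amalgam_adj]
  rintro ⟨l, v, v', hvv', hv, hv'⟩
  exact col.valid hvv' ((mem_colorClass_of_lineEmbedding_eq_inl hv).trans
    (mem_colorClass_of_lineEmbedding_eq_inl hv').symm)

lemma amalgam_adj_inr_iff {p : col.AmalgamVertex x ι} {l : Line (col.colorClass x) ι}
    {u : ↥(col.colorClass x)ᶜ} :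
    (col.amalgam x ι).Adj p (.inr (l, u)) ↔
      (G.map (col.lineEmbedding x ι l)).Adj p (.inr (l, u)) := by
  refine ⟨fun h => ?_, fun h => iSup_adj.2 ⟨l, h⟩⟩
  obtain ⟨l', hl'⟩ := iSup_adj.1 h
  obtain ⟨-, v', -, -, hv'⟩ := (map_adj _ _ _ _).1 hl'
  obtain rfl := eq_of_lineEmbedding_eq_inr hv'
  exact hl'

variable (col x ι) in
def amalgamColor : col.AmalgamVertex x ι → X :=
  Sum.elim (fun _ => x) fun p => col p.2

lemma amalgamColor_lineEmbedding (l : Line (col.colorClass x) ι) (v : V) :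
    col.amalgamColor x ι (col.lineEmbedding x ι l v) = col v := by
  by_cases hv : v ∈ col.colorClass x
  · rw [lineEmbedding_of_mem hv]
    exact hv.symm
  · rw [lineEmbedding_of_notMem hv]
    rfl

variable (col x ι) in
def amalgamColoring : (col.amalgam x ι).Coloring X :=
  Coloring.mk (col.amalgamColor x ι) fun h => by
    obtain ⟨l, v, w, hvw, rfl, rfl⟩ := amalgam_adj.1 h
    simpa only [amalgamColor_lineEmbedding] using col.valid hvw

variable (col x ι) in
def lineCopy (l : Line (col.colorClass x) ι) : G.Copy (col.amalgam x ι) :=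
  (Copy.ofLE _ _ (le_iSup _ l)).comp (Embedding.map (col.lineEmbedding x ι l) G).toCopy

@[simp]
lemma lineCopy_apply (l : Line (col.colorClass x) ι) (v : V) :
    col.lineCopy x ι l v = col.lineEmbedding x ι l v :=
  rfl

lemma cliqueFree_amalgam [Nonempty ι] {n : ℕ} (h : G.CliqueFree n) :
    (col.amalgam x ι).CliqueFree n := by
  intro S hS
  obtain hn | hn := le_or_gt n 1
  · obtain rfl | rfl : n = 0 ∨ n = 1 := by omega
    · exact not_cliqueFree_zero h
    · obtain ⟨p, -⟩ := isNClique_one.1 hS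
      have : Nonempty V := by
        rcases p with w | ⟨-, u⟩
        exacts [⟨w (Classical.arbitrary ι)⟩, ⟨u⟩]
      exact not_isEmpty_of_nonempty V (cliqueFree_one.1 h)
  obtain ⟨l, u, hlu⟩ : ∃ l u, .inr (l, u) ∈ S := by
    obtain ⟨p, hp, q, hq, hpq⟩ := Finset.one_lt_card.1 (hS.card_eq ▸ hn)
    rcases p with w | ⟨l, u⟩
    · rcases q with w' | ⟨l, u⟩
      · exact absurd (hS.isClique hp hq hpq) (not_amalgam_adj_inl_inl w w')
      · exact ⟨l, u, hq⟩
    · exact ⟨l, u, hp⟩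
  have line_eq : ∀ l' u', .inr (l', u') ∈ S → l' = l := by
    intro l' u' hmem
    by_cases he : (.inr (l', u') : col.AmalgamVertex x ι) = .inr (l, u)
    · cases he
      rfl
    · obtain ⟨v, -, -, hv, -⟩ :=
        (map_adj _ _ _ _).1 (amalgam_adj_inr_iff.1 (hS.isClique hmem hlu he))
      exact (eq_of_lineEmbedding_eq_inr hv).symm
  have hS' : (G.map (col.lineEmbedding x ι l)).IsNClique n S := by
    refine ⟨fun p hp q hq hpq => ?_, hS.card_eq⟩
    have hadj := hS.isClique hp hq hpq
    rcases q with w | ⟨l', u'⟩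
    · rcases p with w' | ⟨l', u'⟩
      · exact absurd hadj (not_amalgam_adj_inl_inl _ _)
      · obtain rfl := line_eq l' u' hp
        exact (amalgam_adj_inr_iff.1 hadj.symm).symm
    · obtain rfl := line_eq l' u' hq
      exact amalgam_adj_inr_iff.1 hadj
  obtain ⟨T, hT, -⟩ := (isNClique_map_iff hn).1 hS'
  exact h T hT

end SimpleGraph.Coloring

end

namespace SimpleGraph

variable {α V X : Type} {A : SimpleGraph α} {G : SimpleGraph V}

def IsPartiteRamsey (π : A.Coloring X) (col : G.Coloring X) (κ : Type) (C : Set X) : Prop :=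
  ∀ χ : V → κ, ∃ f : A.Copy G, (∀ a, col (f a) = π a) ∧
    ∀ a b, π a = π b → π a ∈ C → χ (f a) = χ (f b)

lemma isPartiteRamsey_self (π : A.Coloring X) (κ : Type) : IsPartiteRamsey π π κ ∅ :=
  fun _ => ⟨Copy.id A, fun _ => rfl, fun _ _ _ h => h.elim⟩

lemma IsPartiteRamsey.amalgam {π : A.Coloring X} {col : G.Coloring X} {κ : Type} {C : Set X}
    (h : IsPartiteRamsey π col κ C) {x : X} {ι : Type}
    (hι : ∀ c : (ι → col.colorClass x) → κ, ∃ l : Line _ ι, l.IsMono c) :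
    IsPartiteRamsey π (col.amalgamColoring x ι) κ (insert x C) := by
  intro χ
  obtain ⟨l, c, hc⟩ := hι fun w => χ (.inl w)
  obtain ⟨f, hf_col, hf_mono⟩ := h (χ ∘ col.lineEmbedding x ι l)
  have hcol (a : α) : col.amalgamColoring x ι (col.lineCopy x ι l (f a)) = π a := by
    rw [← hf_col, Coloring.lineCopy_apply, ← Coloring.amalgamColor_lineEmbedding l]
    rfl
  have hline (a : α) (ha : π a = x) : χ (col.lineCopy x ι l (f a)) = c := by
    rw [Coloring.lineCopy_apply, Coloring.lineEmbedding_of_mem ((hf_col a).trans ha)]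
    exact hc _
  refine ⟨(col.lineCopy x ι l).comp f, hcol, fun a b hab ha => ?_⟩
  obtain hx | hC := Set.mem_insert_iff.1 ha
  · simp only [Copy.comp_apply, hline a hx, hline b (hab ▸ hx)]
  · exact hf_mono a b hab hC

theorem exists_isPartiteRamsey [Finite α] (π : A.Coloring X) (κ : Type) [Finite κ] [Nonempty κ]
    {n : ℕ} (hA : A.CliqueFree n) (C : Finset X) :
    ∃ (V : Type) (_ : Finite V) (G : SimpleGraph V) (col : G.Coloring X),
      G.CliqueFree n ∧ IsPartiteRamsey π col κ C := by
  induction C using Finset.cons_induction with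
  | empty => exact ⟨α, inferInstance, A, π, hA, by simpa using isPartiteRamsey_self π κ⟩
  | cons x C _ ih =>
    obtain ⟨V, _, G, col, hG, hR⟩ := ih
    obtain ⟨ι, _, hι⟩ := Line.exists_mono_in_high_dimension (col.colorClass x) κ
    have : Nonempty ι :=
      let ⟨l, _⟩ := hι fun _ => Classical.arbitrary κ
      ⟨l.proper.choose⟩
    exact ⟨_, inferInstance, col.amalgam x ι, col.amalgamColoring x ι,
      Coloring.cliqueFree_amalgam hG, by simpa using hR.amalgam hι⟩

def completeTensorGraph (X R : Type) : SimpleGraph (X × R) where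
  Adj p q := p.1 ≠ q.1 ∧ p.2 ≠ q.2
  symm := ⟨fun _ _ h => ⟨h.1.symm, h.2.symm⟩⟩
  loopless := ⟨fun _ h => h.1 rfl⟩

@[simp]
lemma completeTensorGraph_adj {X R : Type} {p q : X × R} :
    (completeTensorGraph X R).Adj p q ↔ p.1 ≠ q.1 ∧ p.2 ≠ q.2 :=
  Iff.rfl

namespace completeTensorGraph

variable (X R : Type)

def fstColoring : (completeTensorGraph X R).Coloring X :=
  Coloring.mk Prod.fst fun h => (completeTensorGraph_adj.1 h).1

lemma cliqueFree [Fintype R] : (completeTensorGraph X R).CliqueFree (Fintype.card R + 1) :=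
  (Coloring.mk Prod.snd fun h => (completeTensorGraph_adj.1 h).2).colorable.cliqueFree
    (Nat.lt_succ_self _)

variable {X R} in
def diagCopy (σ : R ↪ X) : (⊤ : SimpleGraph R).Copy (completeTensorGraph X R) :=
  ⟨⟨fun j => (σ j, j), fun h => completeTensorGraph_adj.2 ⟨σ.injective.ne h, h⟩⟩,
    fun _ _ h => congrArg Prod.snd h⟩

end completeTensorGraph

theorem exists_cliqueFree_forall_exists_monochromatic_isNClique (k : ℕ) (κ : Type) [Fintype κ]
    [Nonempty κ] :
    ∃ (V : Type) (_ : Fintype V) (G : SimpleGraph V), G.CliqueFree (k + 1) ∧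
      ∀ χ : V → κ, ∃ s, G.IsNClique k s ∧ ∀ u ∈ s, ∀ v ∈ s, χ u = χ v := by
  classical
  let N := Fintype.card κ * (k - 1) + 1
  obtain ⟨V, _, G, col, hG, hR⟩ :=
    exists_isPartiteRamsey (completeTensorGraph.fstColoring (Fin N) (Fin k)) κ
      (by simpa using completeTensorGraph.cliqueFree (Fin N) (Fin k)) univ
  refine ⟨V, Fintype.ofFinite V, G, hG, fun χ => ?_⟩
  obtain rfl | hk := k.eq_zero_or_pos
  · exact ⟨∅, by simp, by simp⟩
  obtain ⟨f, -, hf⟩ := hR χ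
  obtain ⟨c, hc⟩ := Fintype.exists_lt_card_fiber_of_mul_lt_card
    (fun y : Fin N => χ (f (y, ⟨0, hk⟩))) (n := k - 1) (by simp [N])
  obtain ⟨U, hU, hUcard⟩ := exists_subset_card_eq (Nat.le_of_pred_lt (m := k) hc)
  let σ := U.orderEmbOfFin hUcard
  have hdiag (j : Fin k) : χ (f (σ j, j)) = c :=
    (hf (σ j, j) (σ j, ⟨0, hk⟩) rfl (by simp)).trans
      (mem_filter.1 (hU (U.orderEmbOfFin_mem _ j))).2
  have hclique := isNClique_map_copy_top (f.comp (completeTensorGraph.diagCopy σ.toEmbedding))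
  refine ⟨_, by simpa using hclique, ?_⟩
  simp only [mem_map, mem_univ, true_and]
  rintro _ ⟨j, rfl⟩ _ ⟨j', rfl⟩
  exact (hdiag j).trans (hdiag j').symm

end SimpleGraph

namespace Digraph

def IsIndepSet {V : Type} (D : Digraph V) (S : Finset V) : Prop :=
  ∀ u ∈ S, ∀ v ∈ S, ¬ D.Adj u v

end Digraph

section LayeredDigraph

variable {Λ : Type} [LinearOrder Λ] {H : SimpleGraph Λ} {k : ℕ}

variable (H k) in
def layeredDigraph : Digraph (Λ × Fin k) where
  Adj p q := p.1 < q.1 ∧ ¬ (p.2 = q.2 ∧ H.Adj p.1 q.1)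

lemma Digraph.IsIndepSet.snd_eq_and_adj_of_fst_ne {S : Finset (Λ × Fin k)}
    (hS : (layeredDigraph H k).IsIndepSet S) {p q : Λ × Fin k} (hp : p ∈ S) (hq : q ∈ S)
    (hpq : p.1 ≠ q.1) : p.2 = q.2 ∧ H.Adj p.1 q.1 := by
  by_contra h
  rcases hpq.lt_or_gt with hlt | hlt
  · exact hS p hp q hq ⟨hlt, h⟩
  · exact hS q hq p hp ⟨hlt, fun ⟨h₁, h₂⟩ => h ⟨h₁.symm, h₂.symm⟩⟩

lemma card_le_of_isIndepSet_layeredDigraph (hH : H.CliqueFree (k + 1))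
    {S : Finset (Λ × Fin k)} (hS : (layeredDigraph H k).IsIndepSet S) : #S ≤ k := by
  by_cases hfst : Set.InjOn Prod.fst (S : Set (Λ × Fin k))
  · have hclique : H.IsClique (S.image Prod.fst : Set Λ) := by
      simp only [coe_image]
      rintro _ ⟨p, hp, rfl⟩ _ ⟨q, hq, rfl⟩ hpq
      exact (hS.snd_eq_and_adj_of_fst_ne hp hq hpq).2
    rw [← card_image_of_injOn hfst]
    by_contra! hlt
    obtain ⟨T, hT, hTcard⟩ := exists_subset_card_eq hlt
    exact hH T ⟨hclique.subset (coe_subset.2 hT), hTcard⟩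
  · simp only [Set.InjOn, mem_coe, not_forall] at hfst
    obtain ⟨p, hp, q, hq, hpq, hne⟩ := hfst
    have hcolumn : ∀ r ∈ S, r.1 = p.1 := fun r hr => by
      by_contra hrp
      have h₁ := hS.snd_eq_and_adj_of_fst_ne hr hp hrp
      have h₂ := hS.snd_eq_and_adj_of_fst_ne hr hq (hpq ▸ hrp)
      exact hne (Prod.ext hpq (h₁.1.symm.trans h₂.1))
    simpa using card_le_card_of_injOn Prod.snd (fun _ _ => mem_coe.2 (mem_univ _))
      fun r hr r' hr' h => Prod.ext ((hcolumn r hr).trans (hcolumn r' hr').symm) h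

lemma nodup_map_fst_of_isChain {P : List (Λ × Fin k)}
    (hP : P.IsChain (layeredDigraph H k).Adj) : (P.map Prod.fst).Nodup :=
  (List.isChain_iff_pairwise.1 ((List.isChain_map _).2 (hP.imp fun _ _ h => h.1))).nodup

lemma exists_forall_notMem_of_isChain_layeredDigraph {ι : Type} [Fintype ι]
    (P : ι → List (Λ × Fin k))
    (hP : ∀ i, (P i).IsChain (layeredDigraph H k).Adj) (hι : Fintype.card ι < k) (u : Λ) :
    ∃ c : Fin k, ∀ i, (u, c) ∉ P i := by
  classical
  let hits (i : ι) : Finset (Fin k) := {c | (u, c) ∈ P i}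
  have hits_le (i : ι) : #(hits i) ≤ 1 := card_le_one.2 fun c hc c' hc' => by
    simp only [hits, mem_filter, mem_univ, true_and] at hc hc'
    exact congrArg Prod.snd
      (List.inj_on_of_nodup_map (nodup_map_fst_of_isChain (hP i)) hc hc' rfl)
  have hlt : #(univ.biUnion hits) < #(univ : Finset (Fin k)) :=
    calc _ ≤ ∑ i, #(hits i) := card_biUnion_le
      _ ≤ ∑ _ : ι, 1 := sum_le_sum fun i _ => hits_le i
      _ < _ := by simpa using hι
  obtain ⟨c, -, hc⟩ := exists_mem_notMem_of_card_lt_card hlt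
  exact ⟨c, fun i hi => hc (mem_biUnion.2 ⟨i, mem_univ _, by simpa [hits] using hi⟩)⟩

lemma exists_isIndepSet_layeredDigraph_forall_notMem
    (hH : ∀ χ : Λ → Fin k, ∃ s, H.IsNClique k s ∧ ∀ u ∈ s, ∀ v ∈ s, χ u = χ v)
    {ι : Type} [Fintype ι] (P : ι → List (Λ × Fin k))
    (hP : ∀ i, (P i).IsChain (layeredDigraph H k).Adj) (hι : Fintype.card ι < k) :
    ∃ S : Finset (Λ × Fin k), #S = k ∧ (∀ v ∈ S, ∀ i, v ∉ P i) ∧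
      (layeredDigraph H k).IsIndepSet S := by
  choose row hrow using exists_forall_notMem_of_isChain_layeredDigraph P hP hι
  obtain ⟨s, hs, hmono⟩ := hH row
  refine ⟨s.map ⟨fun u => (u, row u), fun u v h => congrArg Prod.fst h⟩, by simp [hs.card_eq],
    ?_, ?_⟩
  · intro _ hp
    obtain ⟨u, -, rfl⟩ := mem_map.1 hp
    exact hrow u
  · intro _ hp _ hq ⟨hlt, hnot⟩
    obtain ⟨u, hu, rfl⟩ := mem_map.1 hp
    obtain ⟨v, hv, rfl⟩ := mem_map.1 hq
    exact hnot ⟨hmono u hu v hv, hs.isClique hu hv hlt.ne⟩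

end LayeredDigraph

/-- For every positive integer `k`, there exists a finite digraph `D` (vertex type `V` with an
irreflexive edge relation `E`) with stability number exactly `k`, such that for every collection
of `k - 1` directed paths, the induced subdigraph on the vertices lying on none of these paths
still has stability number `k`. -/
theorem hahn_jackson_conjecture (k : ℕ) (hk : 0 < k) :
    ∃ (V : Type) (_ : Fintype V) (E : V → V → Prop),
      Irreflexive E ∧
      IsGreatest {m : ℕ | ∃ S : Finset V, S.card = m ∧ ∀ u ∈ S, ∀ v ∈ S, ¬ E u v} k ∧
      ∀ P : Fin (k - 1) → List V,
        (∀ i, (P i).Nodup ∧ (P i).Chain' E) →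
        IsGreatest {m : ℕ | ∃ S : Finset V, S.card = m ∧
          (∀ v ∈ S, ∀ i, v ∉ P i) ∧ ∀ u ∈ S, ∀ v ∈ S, ¬ E u v} k := by
  have : NeZero k := ⟨hk.ne'⟩
  obtain ⟨Λ, _, H, hH, hRamsey⟩ :=
    SimpleGraph.exists_cliqueFree_forall_exists_monochromatic_isNClique k (Fin k)
  let : LinearOrder Λ := LinearOrder.lift' _ (Fintype.equivFin Λ).injective
  refine ⟨Λ × Fin k, inferInstance, (layeredDigraph H k).Adj, fun p h => lt_irrefl _ h.1,
    ⟨?_, ?_⟩, fun P hP => ⟨?_, ?_⟩⟩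
  · obtain ⟨S, hcard, -, hS⟩ := exists_isIndepSet_layeredDigraph_forall_notMem hRamsey
      (Fin.elim0 : Fin 0 → List _) (fun i => i.elim0) (by simpa using hk)
    exact ⟨S, hcard, hS⟩
  · rintro m ⟨S, rfl, hS⟩
    exact card_le_of_isIndepSet_layeredDigraph hH hS
  · exact exists_isIndepSet_layeredDigraph_forall_notMem hRamsey P (fun i => (hP i).2)
      (by simpa using Nat.sub_one_lt hk.ne')
  · rintro m ⟨S, rfl, -, hS⟩
    exact card_le_of_isIndepSet_layeredDigraph hH hS
end

section
/- For every positive integer k, there exist a positive integer N and a finite digraph D on N vertices whose stability number is exactly k, such that every set of at least ⌈N/k⌉ vertices of D contains a stable set of size k. -/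
/-!
Passing to complements, we need a graph with no `(k+1)`-clique in which every set of `N / k`
vertices contains a `k`-clique. Choose `M = c n` independent uniform `k`-tuples ("blocks") of `n`
vertices, with `c = 2 (4k)^k`, and join two vertices when some block contains both; the image of
an injective block is a `k`-clique. For `n = 2km`, a block is an injective tuple inside a fixed
`m`-set with probability at least `(4k)^(-k)`, so all `m`-sets contain a block with probability
`> 1/2`.

If `W` is a `(k+1)`-clique, the traces `U_b = W ∩ block b` cover all pairs of `W` and have at most
`k` points, so `k (k+1) ≤ ∑ |U_b| (|U_b| - 1) ≤ k ∑ (|U_b| - 1)`, i.e.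
`∑ |U_b| ≥ k + 1 + #{b | U_b ≠ ∅}`. As block `b` contains `U_b` with probability at most
`(k/n)^|U_b|`, summing over all trace patterns bounds the probability that `W` is a clique by
`n^(-(k+1)) (1 + 2^(k+1) k^k / n)^M ≤ n^(-(k+1)) K` with `K = exp (2^(k+1) k^k c)`. Hence the
expected number of `(k+1)`-cliques is at most `K`, and it is below `2K` with probability `≥ 1/2`.
Choosing `m > 4K` and deleting every vertex of a `(k+1)`-clique leaves more than `k m` vertices.
-/

open Finset

theorem add_card_filter_nonempty_le_sum_card {V β : Type*} [DecidableEq V] [Fintype β] {k : ℕ}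
    {W : Finset V} {U : β → Finset V} (hk : 0 < k)
    (hW : #W = k + 1) (hU : ∀ b, #(U b) ≤ k)
    (hcover : ∀ u ∈ W, ∀ v ∈ W, u ≠ v → ∃ b, u ∈ U b ∧ v ∈ U b) :
    k + 1 + #{b | (U b).Nonempty} ≤ ∑ b, #(U b) := by
  have hpairs : (k + 1) * k ≤ k * ∑ b, (#(U b) - 1) := calc
    (k + 1) * k = #W.offDiag := by rw [offDiag_card, hW, ← Nat.mul_sub_one, Nat.add_sub_cancel]
    _ ≤ #(univ.biUnion fun b => (U b).offDiag) := card_le_card fun p hp => by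
      obtain ⟨hu, hv, huv⟩ := mem_offDiag.1 hp
      obtain ⟨b, hub, hvb⟩ := hcover _ hu _ hv huv
      exact mem_biUnion.2 ⟨b, mem_univ _, mem_offDiag.2 ⟨hub, hvb, huv⟩⟩
    _ ≤ ∑ b, #(U b).offDiag := card_biUnion_le
    _ ≤ ∑ b, k * (#(U b) - 1) := sum_le_sum fun b _ => by
      rw [offDiag_card, ← Nat.mul_sub_one]
      exact Nat.mul_le_mul_right _ (hU b)
    _ = k * ∑ b, (#(U b) - 1) := (mul_sum _ _ _).symm
  have hsplit : ∑ b, #(U b) = ∑ b, (#(U b) - 1) + #{b | (U b).Nonempty} := by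
    rw [card_filter, ← sum_add_distrib]
    refine sum_congr rfl fun b _ => ?_
    split_ifs with h
    · have := h.card_pos; omega
    · simp [not_nonempty_iff_eq_empty.1 h]
  have := Nat.le_of_mul_le_mul_left (by linarith : k * (k + 1) ≤ k * ∑ b, (#(U b) - 1)) hk
  omega

theorem sum_powerset_ite_nonempty_le {V : Type*} [DecidableEq V] (W : Finset V) {x : ℝ}
    (hx : 0 ≤ x) :
    ∑ A ∈ W.powerset, (if A.Nonempty then x else 1) ≤ 1 + 2 ^ #W * x := calc
  _ ≤ ∑ A ∈ W.powerset, ((if A = ∅ then 1 else 0) + x) := sum_le_sum fun A _ => by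
    by_cases hA : A.Nonempty
    · simp [hA, hA.ne_empty]
    · simp [not_nonempty_iff_eq_empty.1 hA, hx]
  _ = 1 + 2 ^ #W * x := by
    rw [sum_add_distrib, sum_ite_eq', if_pos (empty_mem_powerset W), sum_const, card_powerset,
      nsmul_eq_mul]
    push_cast
    ring

theorem pow_le_mul_descFactorial {k m : ℕ} (hm : 2 * k ≤ m) :
    (2 * k * m) ^ k ≤ (4 * k) ^ k * m.descFactorial k := calc
  (2 * k * m) ^ k ≤ (4 * k * (m + 1 - k)) ^ k := by
    refine Nat.pow_le_pow_left ?_ k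
    obtain ⟨j, rfl⟩ := Nat.exists_eq_add_of_le hm
    rw [show 2 * k + j + 1 - k = k + j + 1 by omega]
    nlinarith
  _ = (4 * k) ^ k * (m + 1 - k) ^ k := mul_pow _ _ _
  _ ≤ (4 * k) ^ k * m.descFactorial k := by gcongr; exact m.pow_sub_le_descFactorial k

theorem choose_mul_pow_lt_half {n m M : ℕ} {a b q : ℝ} (ha : 0 ≤ a) (hb : 0 < b)
    (hab : a ≤ (1 - q) * b) (hM : n + 1 ≤ q * M) :
    (n.choose m : ℝ) * a ^ M < b ^ M / 2 := by
  have h2n : (n.choose m : ℝ) ≤ Real.exp n := calc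
    (n.choose m : ℝ) ≤ 2 ^ n := by exact_mod_cast n.choose_le_two_pow m
    _ ≤ Real.exp 1 ^ n := by gcongr; exact Real.exp_one_gt_two.le
    _ = Real.exp n := by rw [← Real.exp_nat_mul, mul_one]
  have haM : a ^ M ≤ Real.exp (-(q * M)) * b ^ M := calc
    a ^ M ≤ (Real.exp (-q) * b) ^ M := by
      gcongr
      exact hab.trans (mul_le_mul_of_nonneg_right (by linarith [Real.add_one_le_exp (-q)]) hb.le)
    _ = Real.exp (-(q * M)) * b ^ M := by
      rw [mul_pow, ← Real.exp_nat_mul]; ring_nf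
  calc (n.choose m : ℝ) * a ^ M ≤ Real.exp n * (Real.exp (-(q * M)) * b ^ M) :=
        mul_le_mul h2n haM (by positivity) (by positivity)
    _ = Real.exp (n - q * M) * b ^ M := by rw [Real.exp_sub, ← mul_assoc, Real.exp_neg]; ring
    _ ≤ Real.exp (-1) * b ^ M := by gcongr; linarith
    _ < 1 / 2 * b ^ M := by gcongr; exact Real.exp_neg_one_lt_half
    _ = b ^ M / 2 := by ring

theorem one_add_div_pow_le_exp {a : ℝ} {n : ℕ} (ha : 0 ≤ a) (hn : 0 < n) (c : ℕ) :
    (1 + a / n) ^ (c * n) ≤ Real.exp (a * c) := calc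
  (1 + a / n) ^ (c * n) ≤ Real.exp (a / n) ^ (c * n) := by
    gcongr
    linarith [Real.add_one_le_exp (a / n)]
  _ = Real.exp (a * c) := by
    rw [← Real.exp_nat_mul]
    congr 1
    push_cast
    field_simp

theorem exists_notMem_notMem_of_card_lt_half {α : Type*} [Fintype α] {A B : Finset α}
    (hA : (#A : ℝ) < Fintype.card α / 2) (hB : (#B : ℝ) ≤ Fintype.card α / 2) :
    ∃ x, x ∉ A ∧ x ∉ B := by
  classical
  have : #(A ∪ B) < #(univ : Finset α) := by
    have : (#(A ∪ B) : ℝ) ≤ #A + #B := by exact_mod_cast card_union_le A B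
    rw [card_univ]
    exact_mod_cast (by linarith : (#(A ∪ B) : ℝ) < Fintype.card α)
  obtain ⟨x, -, hx⟩ := exists_mem_notMem_of_card_lt_card this
  exact ⟨x, fun h => hx (mem_union_left _ h), fun h => hx (mem_union_right _ h)⟩

section Counting

variable {V β : Type*} [Fintype V] [DecidableEq V] {k : ℕ}

theorem card_filter_comp_eq_mul_le {U : Finset V} (g : U → Fin k) :
    #{f : Fin k → V | ∀ x, f (g x) = x} * Fintype.card V ^ #U ≤ Fintype.card V ^ k := by
  classical
  by_cases hg : Function.Injective g
  · have hrange : Fintype.card (Set.range g) = #U := by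
      rw [Set.card_range_of_injective hg, Fintype.card_coe]
    have hle : #{f : Fin k → V | ∀ x, f (g x) = x} ≤ Fintype.card V ^ (k - #U) := calc
      _ ≤ #(univ : Finset (↥(Set.range g)ᶜ → V)) := card_le_card_of_injOn
          (fun (f : Fin k → V) (i : ↥(Set.range g)ᶜ) => f i)
          (fun _ _ => mem_univ _) fun f₁ hf₁ f₂ hf₂ h => funext fun i : Fin k => by
            by_cases hi : i ∈ Set.range g
            · obtain ⟨x, rfl⟩ := hi
              rw [(mem_filter.1 hf₁).2, (mem_filter.1 hf₂).2]
            · exact congrFun h ⟨i, hi⟩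
      _ = Fintype.card V ^ (k - #U) := by
          rw [card_univ, Fintype.card_fun, Fintype.card_compl_set, hrange, Fintype.card_fin]
    have hU : #U ≤ k := by simpa using Fintype.card_le_of_injective g hg
    calc _ ≤ Fintype.card V ^ (k - #U) * Fintype.card V ^ #U := Nat.mul_le_mul_right _ hle
      _ = Fintype.card V ^ k := by rw [← pow_add, Nat.sub_add_cancel hU]
  · obtain ⟨x, y, hxy, hne⟩ := Function.not_injective_iff.1 hg
    rw [filter_eq_empty_iff.2 fun f _ hf => hne (Subtype.ext (by rw [← hf x, ← hf y, hxy]))]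
    simp

theorem card_filter_subset_image_mul_le (U : Finset V) :
    #{f : Fin k → V | U ⊆ univ.image f} * Fintype.card V ^ #U ≤
      k ^ #U * Fintype.card V ^ k := by
  have hcover : ({f : Fin k → V | U ⊆ univ.image f} : Finset _)
      ⊆ univ.biUnion fun g : U → Fin k => {f : Fin k → V | ∀ x, f (g x) = x} := by
    intro f hf
    have hf' : ∀ x : U, ∃ i, f i = x := fun x => by simpa using (mem_filter.1 hf).2 x.2
    choose g hg using hf'
    exact mem_biUnion.2 ⟨g, mem_univ _, mem_filter.2 ⟨mem_univ _, hg⟩⟩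
  calc _ ≤ (∑ g : U → Fin k, #{f : Fin k → V | ∀ x, f (g x) = x}) * Fintype.card V ^ #U :=
        Nat.mul_le_mul_right _ ((card_le_card hcover).trans card_biUnion_le)
    _ ≤ ∑ _g : U → Fin k, Fintype.card V ^ k := by
        rw [sum_mul]; exact sum_le_sum fun g _ => card_filter_comp_eq_mul_le g
    _ = k ^ #U * Fintype.card V ^ k := by simp

theorem filter_subset_image_eq_empty {U : Finset V} (hU : k < #U) :
    ({f : Fin k → V | U ⊆ univ.image f} : Finset _) = ∅ :=
  filter_eq_empty_iff.2 fun f _ hf => by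
    have := (card_le_card hf).trans (card_image_le.trans_eq (card_fin k))
    omega

theorem card_filter_injective_forall_mem (S : Finset V) :
    #{f : Fin k → V | Function.Injective f ∧ ∀ i, f i ∈ S} = (#S).descFactorial k := by
  rw [← Fintype.card_subtype, ← Fintype.card_coe S]
  refine (Fintype.card_congr ?_).trans
    ((Fintype.card_embedding_eq (α := Fin k) (β := S)).trans (by rw [Fintype.card_fin]))
  exact
    { toFun := fun f =>
        ⟨fun i => ⟨f.1 i, f.2.2 i⟩, fun i j h => f.2.1 (congrArg Subtype.val h)⟩
      invFun := fun g =>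
        ⟨fun i => g i, fun i j h => g.injective (Subtype.ext h), fun i => (g i).2⟩
      left_inv := fun _ => rfl
      right_inv := fun _ => rfl }

variable [Fintype β]

theorem prod_card_filter_subset_image_mul_le (U : β → Finset V) :
    (∏ b, #{f : Fin k → V | U b ⊆ univ.image f}) * Fintype.card V ^ (∑ b, #(U b)) ≤
      k ^ (∑ b, #(U b)) * (Fintype.card V ^ k) ^ Fintype.card β := calc
  _ = ∏ b, #{f : Fin k → V | U b ⊆ univ.image f} * Fintype.card V ^ #(U b) := by
    rw [prod_mul_distrib, prod_pow_eq_pow_sum]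
  _ ≤ ∏ b, k ^ #(U b) * Fintype.card V ^ k :=
    prod_le_prod' fun b _ => card_filter_subset_image_mul_le _
  _ = _ := by rw [prod_mul_distrib, prod_pow_eq_pow_sum, prod_const, card_univ]

variable [DecidableEq β]

theorem card_filter_forall_subset_image (U : β → Finset V) :
    #{ω : β → Fin k → V | ∀ b, U b ⊆ univ.image (ω b)}
      = ∏ b, #{f : Fin k → V | U b ⊆ univ.image f} := by
  rw [← Fintype.card_piFinset]
  congr 1
  ext ω
  simp [Fintype.mem_piFinset]

theorem card_filter_exists_forall_not_le (m : ℕ) :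
    (#{ω : β → Fin k → V | ∃ S ∈ powersetCard m univ,
        ∀ b, ¬(Function.Injective (ω b) ∧ ∀ i, ω b i ∈ S)} : ℝ) ≤
      (Fintype.card V).choose m *
        ((Fintype.card V : ℝ) ^ k - m.descFactorial k) ^ Fintype.card β := by
  have hsub : ({ω : β → Fin k → V | ∃ S ∈ powersetCard m univ,
        ∀ b, ¬(Function.Injective (ω b) ∧ ∀ i, ω b i ∈ S)} : Finset _)
      ⊆ (powersetCard m univ).biUnion fun S => Fintype.piFinset fun _ : β =>
          {f : Fin k → V | ¬(Function.Injective f ∧ ∀ i, f i ∈ S)} := by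
    intro ω hω
    simp only [mem_filter, mem_univ, true_and] at hω
    obtain ⟨S, hS, hbad⟩ := hω
    exact mem_biUnion.2
      ⟨S, hS, Fintype.mem_piFinset.2 fun b => mem_filter.2 ⟨mem_univ _, hbad b⟩⟩
  have hbad : ∀ S ∈ powersetCard m (univ : Finset V),
      (#{f : Fin k → V | ¬(Function.Injective f ∧ ∀ i, f i ∈ S)} : ℝ)
        = (Fintype.card V : ℝ) ^ k - m.descFactorial k := by
    intro S hS
    have := card_filter_add_card_filter_not (s := (univ : Finset (Fin k → V)))
      fun f => Function.Injective f ∧ ∀ i, f i ∈ S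
    rw [card_filter_injective_forall_mem, (mem_powersetCard.1 hS).2, card_univ,
      Fintype.card_fun, Fintype.card_fin] at this
    rw [eq_sub_iff_add_eq, add_comm]
    exact_mod_cast this
  calc _ ≤ (∑ S ∈ powersetCard m (univ : Finset V), #(Fintype.piFinset fun _ : β =>
          {f : Fin k → V | ¬(Function.Injective f ∧ ∀ i, f i ∈ S)}) : ℝ) := by
        exact_mod_cast (card_le_card hsub).trans card_biUnion_le
    _ = _ := by
        rw [sum_congr rfl fun S hS => by
            rw [Fintype.card_piFinset, prod_const, card_univ, Nat.cast_pow, hbad S hS],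
          sum_const, card_powersetCard, card_univ, nsmul_eq_mul]

theorem card_filter_exists_forall_not_lt_half {m : ℕ} (hk : 0 < k) (hm : 2 * k ≤ m)
    (hV : Fintype.card V = 2 * k * m) (hβ : Fintype.card β = 2 * (4 * k) ^ k * Fintype.card V) :
    (#{ω : β → Fin k → V | ∃ S ∈ powersetCard m univ,
        ∀ b, ¬(Function.Injective (ω b) ∧ ∀ i, ω b i ∈ S)} : ℝ) <
      (Fintype.card (β → Fin k → V) : ℝ) / 2 := by
  simp only [Fintype.card_fun, Fintype.card_fin, Nat.cast_pow]
  set n := Fintype.card V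
  have hn : 0 < n := by rw [hV]; exact Nat.mul_pos (by omega) (by omega)
  have hd : n ^ k ≤ (4 * k) ^ k * m.descFactorial k := hV ▸ pow_le_mul_descFactorial hm
  refine (card_filter_exists_forall_not_le m).trans_lt
    (choose_mul_pow_lt_half (q := (((4 * k) ^ k : ℕ) : ℝ)⁻¹) ?_ (by positivity) ?_ ?_)
  · have : m.descFactorial k ≤ n ^ k :=
      (Nat.descFactorial_le_pow m k).trans (Nat.pow_le_pow_left (by rw [hV]; nlinarith) k)
    rw [sub_nonneg]
    exact_mod_cast this
  · rw [sub_mul, one_mul, sub_le_sub_iff_left, inv_mul_le_iff₀ (by positivity)]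
    exact_mod_cast hd
  · have h4k : (0 : ℝ) < (4 * k) ^ k := by positivity
    have : (1 : ℝ) ≤ n := by exact_mod_cast hn
    rw [hβ]
    push_cast
    rw [show ((4 * k : ℝ) ^ k)⁻¹ * (2 * (4 * k) ^ k * n) = 2 * n by field_simp]
    linarith

end Counting

namespace SimpleGraph

variable {V W : Type*}

theorem forall_not_compl_adj_iff_isClique {G : SimpleGraph V} {s : Finset V} :
    (∀ u ∈ s, ∀ v ∈ s, ¬Gᶜ.Adj u v) ↔ G.IsClique (s : Set V) := by
  simp [isClique_iff, Set.Pairwise]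

theorem isNClique_comap_iff {H : SimpleGraph W} (φ : V ↪ W) {n : ℕ} {s : Finset V} :
    (H.comap φ).IsNClique n s ↔ H.IsNClique n (s.map φ) := by
  rw [isNClique_iff, isNClique_iff, card_map, coe_map, IsClique, IsClique,
    φ.injective.injOn.pairwise_image]
  rfl

theorem exists_embedding_comap_cliqueFree [Fintype V] [DecidableEq V] (H : SimpleGraph V)
    [DecidableRel H.Adj] (k : ℕ) :
    ∃ (N : ℕ) (φ : Fin N ↪ V), Fintype.card V ≤ N + (k + 1) * #(H.cliqueFinset (k + 1)) ∧
      (H.comap φ).CliqueFree (k + 1) := by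
  set D := (H.cliqueFinset (k + 1)).biUnion id
  refine ⟨#Dᶜ, Dᶜ.equivFin.symm.toEmbedding.trans (Function.Embedding.subtype _), ?_, ?_⟩
  · have : #D ≤ #(H.cliqueFinset (k + 1)) * (k + 1) :=
      card_biUnion_le_card_mul _ _ _ fun s hs => (mem_cliqueFinset_iff.1 hs).card_eq.le
    rw [card_compl, mul_comm]
    omega
  · intro S hS
    obtain ⟨a, ha⟩ : S.Nonempty := card_pos.1 (by rw [hS.card_eq]; omega)
    have hD : (Dᶜ.equivFin.symm a : V) ∈ D := mem_biUnion.2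
      ⟨_, mem_cliqueFinset_iff.2 ((isNClique_comap_iff _).1 hS), mem_map_of_mem _ ha⟩
    exact mem_compl.1 (Dᶜ.equivFin.symm a).2 hD

end SimpleGraph

section BlockGraph

variable {V β : Type*} [DecidableEq V] {k : ℕ}

def blockGraph (ω : β → Fin k → V) : SimpleGraph V where
  Adj u v := u ≠ v ∧ ∃ b, u ∈ univ.image (ω b) ∧ v ∈ univ.image (ω b)

theorem blockGraph_adj {ω : β → Fin k → V} {u v : V} :
    (blockGraph ω).Adj u v ↔ u ≠ v ∧ ∃ b, u ∈ univ.image (ω b) ∧ v ∈ univ.image (ω b) :=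
  Iff.rfl

theorem isNClique_blockGraph_image (ω : β → Fin k → V) {b : β} (hb : Function.Injective (ω b)) :
    (blockGraph ω).IsNClique k (univ.image (ω b)) :=
  ⟨fun _ hu _ hv huv => blockGraph_adj.2 ⟨huv, b, hu, hv⟩,
    by rw [card_image_of_injective _ hb, card_univ, Fintype.card_fin]⟩

variable [Fintype β]

instance (ω : β → Fin k → V) : DecidableRel (blockGraph ω).Adj :=
  fun _ _ => inferInstanceAs (Decidable (_ ∧ _))

variable [Fintype V] [DecidableEq β]

theorem card_filter_forall_subset_image_le {W : Finset V} {U : β → Finset V}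
    (hk : 0 < k) (hW : #W = k + 1)
    (hcover : ∀ u ∈ W, ∀ v ∈ W, u ≠ v → ∃ b, u ∈ U b ∧ v ∈ U b) :
    (#{ω : β → Fin k → V | ∀ b, U b ⊆ univ.image (ω b)} : ℝ) ≤
      ((Fintype.card V : ℝ) ^ k) ^ Fintype.card β / (Fintype.card V : ℝ) ^ (k + 1) *
        ∏ b, if (U b).Nonempty then (k : ℝ) ^ k / Fintype.card V else 1 := by
  set n := Fintype.card V
  have hn : (0 : ℝ) < n := by
    obtain ⟨w, -⟩ := card_pos.1 (by omega : 0 < #W)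
    exact_mod_cast Fintype.card_pos_iff.2 ⟨w⟩
  have hweight : ∀ b, (0 : ℝ) ≤ if (U b).Nonempty then (k : ℝ) ^ k / n else 1 := fun b => by
    split_ifs <;> positivity
  rw [card_filter_forall_subset_image]
  by_cases hbig : ∃ b, k < #(U b)
  · obtain ⟨b, hb⟩ := hbig
    rw [prod_eq_zero (mem_univ b) (by rw [filter_subset_image_eq_empty hb, card_empty]),
      Nat.cast_zero]
    exact mul_nonneg (by positivity) (prod_nonneg fun b _ => hweight b)
  push Not at hbig
  rw [prod_ite, prod_const_one, mul_one, prod_const]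
  set s := ∑ b, #(U b)
  set t := #{b | (U b).Nonempty}
  have hst : k + 1 + t ≤ s := add_card_filter_nonempty_le_sum_card hk hW hbig hcover
  have hsk : s ≤ k * t := calc
    s = ∑ b ∈ univ.filter fun b => (U b).Nonempty, #(U b) :=
      (sum_filter_of_ne fun b _ h => card_ne_zero.1 h).symm
    _ ≤ ∑ _b ∈ univ.filter fun b => (U b).Nonempty, k := sum_le_sum fun b _ => hbig b
    _ = k * t := by rw [sum_const, smul_eq_mul, mul_comm]
  calc (↑(∏ b, #{f : Fin k → V | U b ⊆ univ.image f}) : ℝ)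
      ≤ (k : ℝ) ^ s * ((n : ℝ) ^ k) ^ Fintype.card β / (n : ℝ) ^ s := by
        rw [le_div_iff₀ (by positivity)]
        exact_mod_cast prod_card_filter_subset_image_mul_le U
    _ ≤ ((k : ℝ) ^ k) ^ t * ((n : ℝ) ^ k) ^ Fintype.card β / (n : ℝ) ^ (k + 1 + t) := by
        refine div_le_div₀ (by positivity) (mul_le_mul_of_nonneg_right ?_ (by positivity))
          (by positivity) (pow_le_pow_right₀ (by exact_mod_cast hn) hst)
        rw [← pow_mul]
        exact pow_le_pow_right₀ (by exact_mod_cast hk) hsk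
    _ = _ := by
        rw [div_pow, pow_add]
        field_simp

theorem card_filter_isClique_blockGraph_le {W : Finset V} (hk : 0 < k) (hW : #W = k + 1) :
    (#{ω : β → Fin k → V | (blockGraph ω).IsClique (W : Set V)} : ℝ) ≤
      ((Fintype.card V : ℝ) ^ k) ^ Fintype.card β / (Fintype.card V : ℝ) ^ (k + 1) *
        (1 + 2 ^ (k + 1) * ((k : ℝ) ^ k / Fintype.card V)) ^ Fintype.card β := by
  set x : ℝ := (k : ℝ) ^ k / Fintype.card V
  set C : ℝ := ((Fintype.card V : ℝ) ^ k) ^ Fintype.card β / (Fintype.card V : ℝ) ^ (k + 1)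
  set g : Finset V → ℝ := fun A => if A.Nonempty then x else 1
  have hx : 0 ≤ x := by positivity
  have hg : ∀ A, 0 ≤ g A := fun A => by simp only [g]; split_ifs <;> positivity
  set 𝒰 := (Fintype.piFinset fun _ : β => W.powerset).filter
    fun U => ∀ u ∈ W, ∀ v ∈ W, u ≠ v → ∃ b, u ∈ U b ∧ v ∈ U b
  have hsub : ({ω : β → Fin k → V | (blockGraph ω).IsClique (W : Set V)} : Finset _)
      ⊆ 𝒰.biUnion fun U => {ω : β → Fin k → V | ∀ b, U b ⊆ univ.image (ω b)} := by
    intro ω hω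
    have hclique := (mem_filter.1 hω).2
    refine mem_biUnion.2 ⟨fun b => W.filter (· ∈ univ.image (ω b)), mem_filter.2 ⟨?_, ?_⟩,
      mem_filter.2 ⟨mem_univ _, fun b _ h => (mem_filter.1 h).2⟩⟩
    · exact Fintype.mem_piFinset.2 fun b => mem_powerset.2 (filter_subset _ _)
    · intro u hu v hv huv
      obtain ⟨-, b, hub, hvb⟩ := blockGraph_adj.1 (hclique hu hv huv)
      exact ⟨b, mem_filter.2 ⟨hu, hub⟩, mem_filter.2 ⟨hv, hvb⟩⟩
  calc (#{ω : β → Fin k → V | (blockGraph ω).IsClique (W : Set V)} : ℝ)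
      ≤ ∑ U ∈ 𝒰, (#{ω : β → Fin k → V | ∀ b, U b ⊆ univ.image (ω b)} : ℝ) := by
        exact_mod_cast (card_le_card hsub).trans card_biUnion_le
    _ ≤ ∑ U ∈ 𝒰, C * ∏ b, g (U b) := sum_le_sum fun U hU =>
        card_filter_forall_subset_image_le hk hW (mem_filter.1 hU).2
    _ ≤ ∑ U ∈ Fintype.piFinset fun _ : β => W.powerset, C * ∏ b, g (U b) :=
        sum_le_sum_of_subset_of_nonneg (filter_subset _ _) fun U _ _ =>
          mul_nonneg (by positivity) (prod_nonneg fun b _ => hg _)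
    _ = C * (∑ A ∈ W.powerset, g A) ^ Fintype.card β := by
        rw [← mul_sum, ← prod_univ_sum, prod_const, card_univ]
    _ ≤ C * (1 + 2 ^ (k + 1) * x) ^ Fintype.card β := by
        gcongr
        exact hW ▸ sum_powerset_ite_nonempty_le W hx

theorem sum_card_cliqueFinset_blockGraph_le (hk : 0 < k) :
    (∑ ω : β → Fin k → V, #((blockGraph ω).cliqueFinset (k + 1)) : ℝ) ≤
      ((Fintype.card V : ℝ) ^ k) ^ Fintype.card β *
        (1 + 2 ^ (k + 1) * ((k : ℝ) ^ k / Fintype.card V)) ^ Fintype.card β := by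
  set n := Fintype.card V
  set Y : ℝ := (1 + 2 ^ (k + 1) * ((k : ℝ) ^ k / n)) ^ Fintype.card β
  have hcliques : ∀ ω : β → Fin k → V, (blockGraph ω).cliqueFinset (k + 1)
      = (powersetCard (k + 1) univ).filter fun W : Finset V =>
          (blockGraph ω).IsClique (W : Set V) := by
    intro ω; ext W
    simp [SimpleGraph.mem_cliqueFinset_iff, SimpleGraph.isNClique_iff, and_comm]
  have hswap : ∑ ω : β → Fin k → V, #((blockGraph ω).cliqueFinset (k + 1))
      = ∑ W ∈ powersetCard (k + 1) (univ : Finset V),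
          #{ω : β → Fin k → V | (blockGraph ω).IsClique (W : Set V)} := by
    simp_rw [hcliques]
    exact sum_card_bipartiteAbove_eq_sum_card_bipartiteBelow _
  rw [← Nat.cast_sum, hswap]
  push_cast
  calc ∑ W ∈ powersetCard (k + 1) (univ : Finset V),
        (#{ω : β → Fin k → V | (blockGraph ω).IsClique (W : Set V)} : ℝ)
      ≤ ∑ _W ∈ powersetCard (k + 1) (univ : Finset V),
          ((n : ℝ) ^ k) ^ Fintype.card β / (n : ℝ) ^ (k + 1) * Y :=
        sum_le_sum fun W hW => card_filter_isClique_blockGraph_le hk (mem_powersetCard.1 hW).2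
    _ = (n.choose (k + 1) : ℝ) * ((n : ℝ) ^ k) ^ Fintype.card β / (n : ℝ) ^ (k + 1) * Y := by
        rw [sum_const, card_powersetCard, card_univ, nsmul_eq_mul]; ring
    _ ≤ ((n : ℝ) ^ k) ^ Fintype.card β * Y := by
        gcongr
        refine div_le_of_le_mul₀ (by positivity) (by positivity) ?_
        rw [mul_comm]
        gcongr
        exact_mod_cast n.choose_le_pow (k + 1)

theorem card_filter_le_card_cliqueFinset_blockGraph_le_half (hk : 0 < k) {K : ℝ} (hK₀ : 0 < K)
    (hK : (1 + 2 ^ (k + 1) * ((k : ℝ) ^ k / Fintype.card V)) ^ Fintype.card β ≤ K) :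
    (#{ω : β → Fin k → V | 2 * K ≤ #((blockGraph ω).cliqueFinset (k + 1))} : ℝ) ≤
      (Fintype.card (β → Fin k → V) : ℝ) / 2 := by
  simp only [Fintype.card_fun, Fintype.card_fin, Nat.cast_pow]
  set bad := ({ω : β → Fin k → V | 2 * K ≤ #((blockGraph ω).cliqueFinset (k + 1))} : Finset _)
  have : (#bad : ℝ) * (2 * K) ≤ ((Fintype.card V : ℝ) ^ k) ^ Fintype.card β * K := calc
    (#bad : ℝ) * (2 * K) = ∑ _ω ∈ bad, 2 * K := by rw [sum_const, nsmul_eq_mul]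
    _ ≤ ∑ ω ∈ bad, (#((blockGraph ω).cliqueFinset (k + 1)) : ℝ) :=
      sum_le_sum fun ω hω => (mem_filter.1 hω).2
    _ ≤ ∑ ω, (#((blockGraph ω).cliqueFinset (k + 1)) : ℝ) :=
      sum_le_sum_of_subset_of_nonneg (subset_univ _) fun _ _ _ => by positivity
    _ ≤ _ := (sum_card_cliqueFinset_blockGraph_le (V := V) (β := β) hk).trans (by gcongr)
  nlinarith

end BlockGraph

theorem exists_blocks_covering_large_sets_with_few_cliques {k : ℕ} (hk : 0 < k) :
    ∃ (n m M : ℕ) (ω : Fin M → Fin k → Fin n),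
      (∀ S ∈ powersetCard m univ, ∃ b, Function.Injective (ω b) ∧ ∀ i, ω b i ∈ S) ∧
        (k + 1) * #((blockGraph ω).cliqueFinset (k + 1)) + k * m ≤ n := by
  obtain ⟨c, hc⟩ : ∃ c, c = 2 * (4 * k) ^ k := ⟨_, rfl⟩
  obtain ⟨K, hK⟩ : ∃ K : ℝ, K = Real.exp (2 ^ (k + 1) * k ^ k * c) := ⟨_, rfl⟩
  obtain ⟨m, hm⟩ : ∃ m, m = 2 * k + ⌈4 * K⌉₊ := ⟨_, rfl⟩
  obtain ⟨n, hn⟩ : ∃ n, n = 2 * k * m := ⟨_, rfl⟩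
  have hn₀ : 0 < n := by rw [hn, hm]; positivity
  have h₁ := card_filter_exists_forall_not_lt_half (V := Fin n) (β := Fin (c * n)) (m := m) hk
    (by omega) (by rw [Fintype.card_fin, hn]) (by simp [hc])
  have hexp := one_add_div_pow_le_exp (a := 2 ^ (k + 1) * k ^ k) (by positivity) hn₀ c
  rw [mul_div_assoc, ← hK] at hexp
  have h₂ := card_filter_le_card_cliqueFinset_blockGraph_le_half (V := Fin n) (β := Fin (c * n)) hk
    (hK ▸ Real.exp_pos _) (by simpa using hexp)
  obtain ⟨ω, hω₁, hω₂⟩ := exists_notMem_notMem_of_card_lt_half h₁ h₂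
  simp only [mem_filter, mem_univ, true_and, not_exists, not_and, not_le] at hω₁ hω₂
  refine ⟨n, m, c * n, ω, fun S hS => by simpa using hω₁ S hS, ?_⟩
  have : ((k + 1) * #((blockGraph ω).cliqueFinset (k + 1)) : ℝ) < k * m := calc
    _ < (k + 1) * (2 * K) := by gcongr
    _ ≤ k * (4 * K) := by nlinarith [(Nat.one_le_cast (α := ℝ)).2 hk]
    _ ≤ k * m := by
      gcongr
      rw [hm]
      push_cast
      linarith [Nat.le_ceil (4 * K)]
  have : (k + 1) * #((blockGraph ω).cliqueFinset (k + 1)) < k * m := by exact_mod_cast this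
  linarith

theorem exists_cliqueFree_forall_exists_isNClique {k : ℕ} (hk : 0 < k) :
    ∃ (N m : ℕ) (G : SimpleGraph (Fin N)), k * m ≤ N ∧ G.CliqueFree (k + 1) ∧
      ∀ T : Finset (Fin N), m ≤ #T → ∃ S ⊆ T, G.IsNClique k S := by
  obtain ⟨n, m, M, ω, hblocks, hcount⟩ := exists_blocks_covering_large_sets_with_few_cliques hk
  obtain ⟨N, φ, hN, hfree⟩ := (blockGraph ω).exists_embedding_comap_cliqueFree k
  rw [Fintype.card_fin] at hN
  refine ⟨N, m, _, by omega, hfree, fun T hT => ?_⟩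
  obtain ⟨S', hS'T, hS'⟩ := exists_subset_card_eq (s := T.map φ) (n := m) (by rwa [card_map])
  obtain ⟨b, hinj, hb⟩ := hblocks S' (mem_powersetCard.2 ⟨subset_univ _, hS'⟩)
  obtain ⟨S, hST, hS⟩ := subset_map_iff.1 ((image_subset_iff.2 fun i _ => hb i).trans hS'T)
  exact ⟨S, hST, (SimpleGraph.isNClique_comap_iff φ).2 (hS ▸ isNClique_blockGraph_image ω hinj)⟩

/-- For every positive integer `k`, there exist a positive integer `N` and a digraph on `N`
vertices with stability number exactly `k`, such that every set of at least `⌈N/k⌉` vertices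
contains a stable set of size `k`. -/
theorem exists_digraph_large_sets_contain_stable (k : ℕ) (hk : 0 < k) :
    ∃ N : ℕ, 0 < N ∧ ∃ E : Fin N → Fin N → Prop,
      Irreflexive E ∧
      IsGreatest {m : ℕ | ∃ S : Finset (Fin N), S.card = m ∧ ∀ u ∈ S, ∀ v ∈ S, ¬ E u v} k ∧
      ∀ T : Finset (Fin N), ⌈(N : ℚ) / (k : ℚ)⌉₊ ≤ T.card →
        ∃ S ⊆ T, S.card = k ∧ ∀ u ∈ S, ∀ v ∈ S, ¬ E u v := by
  obtain ⟨N, m, G, hkm, hfree, hclique⟩ := exists_cliqueFree_forall_exists_isNClique hk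
  have hmT : ∀ T : Finset (Fin N), ⌈(N : ℚ) / k⌉₊ ≤ #T → m ≤ #T := by
    have : (m : ℚ) ≤ N / k := by
      rw [le_div_iff₀ (by exact_mod_cast hk)]
      exact_mod_cast mul_comm m k ▸ hkm
    exact fun T hT => (Nat.cast_le.1 (this.trans (Nat.le_ceil _))).trans hT
  obtain ⟨S₀, -, hS₀⟩ := hclique univ (by rw [card_univ, Fintype.card_fin]; nlinarith)
  refine ⟨N, ?_, Gᶜ.Adj, fun v => Gᶜ.irrefl, ⟨⟨S₀, hS₀.card_eq,
    SimpleGraph.forall_not_compl_adj_iff_isClique.2 hS₀.isClique⟩, ?_⟩, fun T hT => ?_⟩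
  · simpa using hk.trans_le (hS₀.card_eq ▸ card_le_univ S₀ :)
  · rintro _ ⟨S, rfl, hS⟩
    by_contra! h
    obtain ⟨S', hS'S, hS'⟩ := exists_subset_card_eq h
    exact hfree S' ⟨(SimpleGraph.forall_not_compl_adj_iff_isClique.1 hS).subset hS'S, hS'⟩
  · obtain ⟨S, hST, hS⟩ := hclique T (hmT T hT)
    exact ⟨S, hST, hS.card_eq, SimpleGraph.forall_not_compl_adj_iff_isClique.2 hS.isClique⟩
end

section
/- For every integer k ≥ 3 and every integer n ≥ 2^{15k²} that is a multiple of 2k, there exist an integer m with m ≥ 3n/4 and a simple graph G on m vertices with no clique of size k+1 such that every set of ⌈n/(2k)⌉ vertices of G contains a clique of size k. -/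
/-!
Take `n = 2kN` vertices and `e = (4k)^k (n + 2)` independent uniformly random `k`-tuples of
vertices. A tuple is *bad* if its vertex set meets another one in two vertices or lies in a Berge
triangle with two others. With positive probability
* every set of `N₀ = N - k⌊N/4k⌋ ≥ 3N/4` vertices contains the vertex set of an injective
  tuple: a fixed set is missed by one tuple with probability at most `1 - (4k)^(-k)`, and there
  are at most `2^n` sets;
* there are at most `D = ⌊N/4k⌋` bad tuples: their expected number is `O((4k)^(3k) k^6)`,
  which is tiny compared with `n ≥ 2^(15k²)`.
The graph is the union of the cliques on the vertex sets of the good tuples. These sets pairwise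
share at most one vertex and contain no Berge triangle, so every clique lies inside one of them and
the graph is `K_{k+1}`-free. A set `U` of `N` vertices, minus the at most `kD` vertices of bad
tuples, still has `N₀` vertices, so it contains the vertex set of a good tuple: a `k`-clique.
-/

open Finset Function

def IsBergeTriangle {V : Type*} [DecidableEq V] (A B C : Finset V) : Prop :=
  ∃ x ∈ A ∩ B, ∃ y ∈ B ∩ C, ∃ z ∈ C ∩ A, x ≠ y ∧ y ≠ z ∧ z ≠ x

instance {V : Type*} [DecidableEq V] (A B C : Finset V) : Decidable (IsBergeTriangle A B C) := by
  unfold IsBergeTriangle; infer_instance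

section BadIndices

variable {V ι : Type*} [DecidableEq V] [Fintype ι] [DecidableEq ι] {s : ι → Finset V}

def badIndices (s : ι → Finset V) : Finset ι :=
  {i | (∃ j, j ≠ i ∧ 1 < #(s i ∩ s j)) ∨
    ∃ j l, j ≠ i ∧ l ≠ i ∧ j ≠ l ∧ IsBergeTriangle (s i) (s j) (s l)}

lemma mem_badIndices {i : ι} : i ∈ badIndices s ↔ (∃ j, j ≠ i ∧ 1 < #(s i ∩ s j)) ∨
    ∃ j l, j ≠ i ∧ l ≠ i ∧ j ≠ l ∧ IsBergeTriangle (s i) (s j) (s l) := by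
  simp [badIndices]

end BadIndices

namespace SimpleGraph

variable {V ι : Type*}

def cliqueUnion (s : ι → Finset V) : SimpleGraph V where
  Adj u v := u ≠ v ∧ ∃ i, u ∈ s i ∧ v ∈ s i
  symm := ⟨fun _ _ ⟨h, i, hu, hv⟩ => ⟨h.symm, i, hv, hu⟩⟩
  loopless := ⟨fun _ h => h.1 rfl⟩

variable [DecidableEq V] {s : ι → Finset V}

theorem exists_subset_of_isClique_cliqueUnion (hlin : ∀ i j, i ≠ j → #(s i ∩ s j) ≤ 1)
    (htri : ∀ i j l, i ≠ j → j ≠ l → l ≠ i → ¬IsBergeTriangle (s i) (s j) (s l))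
    {t : Finset V} (ht : (cliqueUnion s).IsClique (t : Set V)) (ht₂ : 1 < #t) :
    ∃ i, t ⊆ s i := by
  obtain ⟨u, hu, v, hv, huv⟩ := one_lt_card.1 ht₂
  obtain ⟨-, i, hui, hvi⟩ := ht hu hv huv
  refine ⟨i, fun w hw => by_contra fun hwi => ?_⟩
  have hwu : w ≠ u := by rintro rfl; exact hwi hui
  have hwv : w ≠ v := by rintro rfl; exact hwi hvi
  obtain ⟨-, j, huj, hwj⟩ := ht hu hw hwu.symm
  obtain ⟨-, l, hwl, hvl⟩ := ht hw hv hwv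
  have hij : i ≠ j := by rintro rfl; exact hwi hwj
  have hli : l ≠ i := by rintro rfl; exact hwi hwl
  by_cases hjl : j = l
  · subst hjl
    have : 1 < #(s i ∩ s j) :=
      one_lt_card.2 ⟨u, mem_inter.2 ⟨hui, huj⟩, v, mem_inter.2 ⟨hvi, hvl⟩, huv⟩
    exact (hlin i j hij).not_gt this
  · exact htri i j l hij hjl hli
      ⟨u, mem_inter.2 ⟨hui, huj⟩, w, mem_inter.2 ⟨hwj, hwl⟩, v,
        mem_inter.2 ⟨hvl, hvi⟩, hwu.symm, hwv, huv.symm⟩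

theorem cliqueFree_cliqueUnion {k : ℕ} (hk : 0 < k) (hs : ∀ i, #(s i) ≤ k)
    (hlin : ∀ i j, i ≠ j → #(s i ∩ s j) ≤ 1)
    (htri : ∀ i j l, i ≠ j → j ≠ l → l ≠ i → ¬IsBergeTriangle (s i) (s j) (s l)) :
    (cliqueUnion s).CliqueFree (k + 1) := by
  intro t ht
  obtain ⟨i, hi⟩ := exists_subset_of_isClique_cliqueUnion hlin htri ht.isClique
    (by rw [ht.card_eq]; omega)
  have := (card_le_card hi).trans (hs i)
  rw [ht.card_eq] at this
  omega

variable [Fintype ι] [DecidableEq ι]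

def trimmedCliqueUnion (s : ι → Finset V) : SimpleGraph V :=
  cliqueUnion fun i : {i // i ∉ badIndices s} => s i

theorem cliqueFree_trimmedCliqueUnion {k : ℕ} (hk : 0 < k) (hs : ∀ i, #(s i) ≤ k) :
    (trimmedCliqueUnion s).CliqueFree (k + 1) := by
  refine cliqueFree_cliqueUnion hk (fun i => hs i) (fun i j hij => ?_)
    fun i j l hij hjl hli h => ?_
  · by_contra! h
    exact i.2 (mem_badIndices.2 (Or.inl ⟨j, fun h => hij (Subtype.ext h).symm, h⟩))
  · exact i.2 (mem_badIndices.2 (Or.inr ⟨j, l, fun h => hij (Subtype.ext h).symm,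
      fun h => hli (Subtype.ext h), fun h => hjl (Subtype.ext h), h⟩))

theorem exists_isNClique_trimmedCliqueUnion {k N : ℕ} (hs : ∀ i, #(s i) ≤ k)
    (hcov : ∀ S : Finset V, #S = N → ∃ i, #(s i) = k ∧ s i ⊆ S)
    {U : Finset V} (hU : N + k * #(badIndices s) ≤ #U) :
    ∃ S ⊆ U, (trimmedCliqueUnion s).IsNClique k S := by
  have hW : N ≤ #(U \ (badIndices s).biUnion s) := by
    have hbad : #((badIndices s).biUnion s) ≤ k * #(badIndices s) := by
      rw [mul_comm]
      exact card_biUnion_le.trans (sum_le_card_nsmul _ _ _ fun i _ => hs i)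
    have := le_card_sdiff ((badIndices s).biUnion s) U
    omega
  obtain ⟨S, hSW, hSN⟩ := exists_subset_card_eq hW
  obtain ⟨i, hik, hiS⟩ := hcov S hSN
  have hgood : ∀ x ∈ s i, i ∉ badIndices s := fun x hx hi =>
    (mem_sdiff.1 (hSW (hiS hx))).2 (mem_biUnion.2 ⟨i, hi, hx⟩)
  refine ⟨s i, fun x hx => (mem_sdiff.1 (hSW (hiS hx))).1, ⟨?_, hik⟩⟩
  intro x hx y hy hxy
  exact ⟨hxy, ⟨i, hgood x hx⟩, hx, hy⟩

end SimpleGraph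

lemma injective_vecCons₂ {ι : Type*} {p q : ι} (hpq : p ≠ q) : Injective ![p, q] := by
  intro a b
  fin_cases a <;> fin_cases b <;> simp [hpq, hpq.symm]

lemma injective_vecCons₃ {ι : Type*} {i j l : ι} (hij : i ≠ j) (hjl : j ≠ l)
    (hli : l ≠ i) : Injective ![i, j, l] := by
  intro a b
  fin_cases a <;> fin_cases b <;> simp [hij, hjl, hli, hij.symm, hjl.symm, hli.symm]

lemma card_offDiag_univ_le {α : Type*} [Fintype α] [DecidableEq α] :
    #(univ : Finset α).offDiag ≤ Fintype.card α ^ 2 := by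
  rw [offDiag_card, card_univ, sq]
  exact Nat.sub_le _ _

lemma card_piFinset_mul_le {β : Type*} [DecidableEq β] {r a b : ℕ} (t : Fin r → Finset β)
    (h : ∀ i, #(t i) * a ≤ b) : #(Fintype.piFinset t) * a ^ r ≤ b ^ r := by
  rw [Fintype.card_piFinset]
  calc (∏ i, #(t i)) * a ^ r = ∏ i, #(t i) * a := by
        rw [prod_mul_distrib, prod_const, card_univ, Fintype.card_fin]
    _ ≤ ∏ _i : Fin r, b := prod_le_prod' fun i _ => h i
    _ = b ^ r := by rw [prod_const, card_univ, Fintype.card_fin]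

lemma sum_card_filter_mul_le {α β : Type*} [Fintype α] (t : Finset β) (r : α → β → Prop)
    [∀ a b, Decidable (r a b)] {c M : ℕ} (h : ∀ b ∈ t, #{a | r a b} * c ≤ M) :
    (∑ a, #{b ∈ t | r a b}) * c ≤ #t * M := by
  have := sum_card_bipartiteAbove_eq_sum_card_bipartiteBelow r (s := univ) (t := t)
  simp only [bipartiteAbove, bipartiteBelow] at this
  rw [this, sum_mul, ← smul_eq_mul]
  exact sum_le_card_nsmul _ _ _ h

section Restriction

variable {ι κ β : Type*} [Fintype ι] [DecidableEq ι] [Fintype κ] [DecidableEq κ] [Fintype β]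

theorem card_filter_comp_embedding_mul_le (s : κ ↪ ι) (P : (κ → β) → Prop)
    [DecidablePred P] :
    #{f : ι → β | P (f ∘ s)} * Fintype.card β ^ Fintype.card κ ≤
      #{g : κ → β | P g} * Fintype.card β ^ Fintype.card ι := by
  classical
  let R := {x // x ∉ Set.range s}
  have hR : Fintype.card R + Fintype.card κ = Fintype.card ι := by
    rw [Fintype.card_subtype_compl, ← Set.card_range_of_injective s.injective]
    have := Fintype.card_subtype_le (· ∈ Set.range s)
    simp only [Fintype.card_ofFinset] at *
    omega
  have hinj : #{f : ι → β | P (f ∘ s)} ≤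
      #(({g | P g} : Finset (κ → β)) ×ˢ (univ : Finset (R → β))) := by
    refine card_le_card_of_injOn (fun f => (f ∘ s, fun x => f x))
      (fun f hf => by simpa using hf) fun f₁ _ f₂ _ h => funext fun x => ?_
    obtain ⟨h₁, h₂⟩ := Prod.ext_iff.1 h
    by_cases hx : x ∈ Set.range s
    · obtain ⟨a, rfl⟩ := hx
      exact congrFun h₁ a
    · exact congrFun h₂ ⟨x, hx⟩
  calc _ ≤ #(({g | P g} : Finset (κ → β)) ×ˢ (univ : Finset (R → β))) *
        Fintype.card β ^ Fintype.card κ := Nat.mul_le_mul_right _ hinj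
    _ = _ := by rw [card_product, card_univ, Fintype.card_fun, mul_assoc, ← pow_add, hR]

theorem card_filter_comp_embedding_mul_le_of [Nonempty β] (s : κ ↪ ι)
    (P : (κ → β) → Prop) [DecidablePred P] {a b : ℕ}
    (h : #{g : κ → β | P g} * a ≤ b * Fintype.card β ^ Fintype.card κ) :
    #{f : ι → β | P (f ∘ s)} * a ≤ b * Fintype.card β ^ Fintype.card ι := by
  refine Nat.le_of_mul_le_mul_right (c := Fintype.card β ^ Fintype.card κ) ?_
    (pow_pos Fintype.card_pos _)
  calc #{f : ι → β | P (f ∘ s)} * a * Fintype.card β ^ Fintype.card κ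
      = #{f : ι → β | P (f ∘ s)} * Fintype.card β ^ Fintype.card κ * a := by ring
    _ ≤ #{g : κ → β | P g} * Fintype.card β ^ Fintype.card ι * a :=
      Nat.mul_le_mul_right _ (card_filter_comp_embedding_mul_le s P)
    _ = #{g : κ → β | P g} * a * Fintype.card β ^ Fintype.card ι := by ring
    _ ≤ b * Fintype.card β ^ Fintype.card κ * Fintype.card β ^ Fintype.card ι := by gcongr
    _ = _ := by ring

theorem card_filter_apply_eq_and_apply_eq_mul_le [DecidableEq β] {p q : ι} (hpq : p ≠ q)
    (x y : β) :
    #{f : ι → β | f p = x ∧ f q = y} * Fintype.card β ^ 2 ≤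
      Fintype.card β ^ Fintype.card ι := by
  have := card_filter_comp_embedding_mul_le ⟨_, injective_vecCons₂ hpq⟩ (· = ![x, y])
  rw [filter_eq', if_pos (mem_univ _), card_singleton, one_mul] at this
  simpa [funext_iff, Fin.forall_fin_two] using this

end Restriction

section RandomTuples

variable {k n : ℕ}

lemma card_filter_mem_image_mul_le {x y : Fin n} (hxy : x ≠ y) :
    #{f : Fin k → Fin n | x ∈ univ.image f ∧ y ∈ univ.image f} * n ^ 2 ≤
      k ^ 2 * n ^ k := by
  have hsub : ({f | x ∈ univ.image f ∧ y ∈ univ.image f} : Finset (Fin k → Fin n)) ⊆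
      (univ : Finset (Fin k)).offDiag.biUnion fun pq => {f | f pq.1 = x ∧ f pq.2 = y} := by
    intro f hf
    simp only [mem_filter, mem_univ, true_and, mem_image] at hf
    obtain ⟨⟨p, rfl⟩, ⟨q, rfl⟩⟩ := hf
    exact mem_biUnion.2 ⟨(p, q), by simpa using fun h => hxy (congrArg f h), by simp⟩
  calc _ ≤ ∑ pq ∈ (univ : Finset (Fin k)).offDiag,
        #{f : Fin k → Fin n | f pq.1 = x ∧ f pq.2 = y} * n ^ 2 := by
        rw [← sum_mul]
        exact Nat.mul_le_mul_right _ ((card_le_card hsub).trans card_biUnion_le)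
    _ ≤ ∑ _pq ∈ (univ : Finset (Fin k)).offDiag, n ^ k := sum_le_sum fun pq hpq => by
        simpa using card_filter_apply_eq_and_apply_eq_mul_le (mem_offDiag.1 hpq).2.2 x y
    _ ≤ k ^ 2 * n ^ k := by
        rw [sum_const, smul_eq_mul]
        exact Nat.mul_le_mul_right _ (by simpa using card_offDiag_univ_le (α := Fin k))

lemma card_filter_one_lt_card_inter_mul_le :
    #{g : Fin 2 → Fin k → Fin n | 1 < #(univ.image (g 0) ∩ univ.image (g 1))} * n ^ 2 ≤
      k ^ 4 * (n ^ k) ^ 2 := by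
  rcases n.eq_zero_or_pos with rfl | hn
  · simp
  let C : Fin n × Fin n → Finset (Fin k → Fin n) :=
    fun xy => {f | xy.1 ∈ univ.image f ∧ xy.2 ∈ univ.image f}
  have hsub : ({g | 1 < #(univ.image (g 0) ∩ univ.image (g 1))} :
      Finset (Fin 2 → Fin k → Fin n)) ⊆
      (univ : Finset (Fin n)).offDiag.biUnion fun xy => Fintype.piFinset fun _ => C xy := by
    intro g hg
    obtain ⟨x, hx, y, hy, hxy⟩ := one_lt_card.1 (mem_filter.1 hg).2
    rw [mem_inter] at hx hy
    refine mem_biUnion.2 ⟨(x, y), by simpa using hxy, Fintype.mem_piFinset.2 fun i => ?_⟩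
    fin_cases i
    · exact mem_filter.2 ⟨mem_univ _, hx.1, hy.1⟩
    · exact mem_filter.2 ⟨mem_univ _, hx.2, hy.2⟩
  refine Nat.le_of_mul_le_mul_right (c := n ^ 2) ?_ (by positivity)
  calc _ ≤ ∑ xy ∈ (univ : Finset (Fin n)).offDiag,
        #(Fintype.piFinset fun _ : Fin 2 => C xy) * (n ^ 2) ^ 2 := by
        rw [mul_assoc, ← sq, ← sum_mul]
        exact Nat.mul_le_mul_right _ ((card_le_card hsub).trans card_biUnion_le)
    _ ≤ ∑ _xy ∈ (univ : Finset (Fin n)).offDiag, (k ^ 2 * n ^ k) ^ 2 :=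
        sum_le_sum fun xy hxy => card_piFinset_mul_le _ fun _ =>
          card_filter_mem_image_mul_le (mem_offDiag.1 hxy).2.2
    _ ≤ n ^ 2 * (k ^ 2 * n ^ k) ^ 2 := by
        rw [sum_const, smul_eq_mul]
        exact Nat.mul_le_mul_right _ (by simpa using card_offDiag_univ_le (α := Fin n))
    _ = k ^ 4 * (n ^ k) ^ 2 * n ^ 2 := by ring

lemma card_filter_isBergeTriangle_mul_le :
    #{g : Fin 3 → Fin k → Fin n |
      IsBergeTriangle (univ.image (g 0)) (univ.image (g 1)) (univ.image (g 2))} * n ^ 3 ≤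
      k ^ 6 * (n ^ k) ^ 3 := by
  rcases n.eq_zero_or_pos with rfl | hn
  · simp
  let C : Fin n → Fin n → Finset (Fin k → Fin n) :=
    fun x y => {f | x ∈ univ.image f ∧ y ∈ univ.image f}
  let T : Finset (Fin n × Fin n × Fin n) :=
    {xyz | xyz.1 ≠ xyz.2.1 ∧ xyz.2.1 ≠ xyz.2.2 ∧ xyz.2.2 ≠ xyz.1}
  have hsub : ({g | IsBergeTriangle (univ.image (g 0)) (univ.image (g 1)) (univ.image (g 2))} :
      Finset (Fin 3 → Fin k → Fin n)) ⊆
      T.biUnion fun xyz => Fintype.piFinset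
        ![C xyz.2.2 xyz.1, C xyz.1 xyz.2.1, C xyz.2.1 xyz.2.2] := by
    intro g hg
    obtain ⟨x, hx, y, hy, z, hz, hxy, hyz, hzx⟩ := (mem_filter.1 hg).2
    rw [mem_inter] at hx hy hz
    refine mem_biUnion.2 ⟨(x, y, z), by simp [T, hxy, hyz, hzx],
      Fintype.mem_piFinset.2 fun i => ?_⟩
    fin_cases i
    · exact mem_filter.2 ⟨mem_univ _, hz.2, hx.1⟩
    · exact mem_filter.2 ⟨mem_univ _, hx.2, hy.1⟩
    · exact mem_filter.2 ⟨mem_univ _, hy.2, hz.1⟩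
  refine Nat.le_of_mul_le_mul_right (c := n ^ 3) ?_ (by positivity)
  calc _ ≤ ∑ xyz ∈ T, #(Fintype.piFinset
        ![C xyz.2.2 xyz.1, C xyz.1 xyz.2.1, C xyz.2.1 xyz.2.2]) * (n ^ 2) ^ 3 := by
        rw [mul_assoc, show n ^ 3 * n ^ 3 = (n ^ 2) ^ 3 by ring, ← sum_mul]
        exact Nat.mul_le_mul_right _ ((card_le_card hsub).trans card_biUnion_le)
    _ ≤ ∑ _xyz ∈ T, (k ^ 2 * n ^ k) ^ 3 := by
        refine sum_le_sum fun xyz hxyz => card_piFinset_mul_le _ fun i => ?_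
        simp only [T, mem_filter, mem_univ, true_and] at hxyz
        fin_cases i
        · exact card_filter_mem_image_mul_le hxyz.2.2
        · exact card_filter_mem_image_mul_le hxyz.1
        · exact card_filter_mem_image_mul_le hxyz.2.1
    _ ≤ n ^ 3 * (k ^ 2 * n ^ k) ^ 3 := by
        rw [sum_const, smul_eq_mul]
        exact Nat.mul_le_mul_right _ ((card_filter_le _ _).trans_eq (by simp; ring))
    _ = k ^ 6 * (n ^ k) ^ 3 * n ^ 3 := by ring

end RandomTuples

section RandomFamilies

variable {k n e : ℕ}

lemma card_filter_one_lt_card_inter_apply_mul_le {i j : Fin e} (hij : i ≠ j) :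
    #{ω : Fin e → Fin k → Fin n | 1 < #(univ.image (ω i) ∩ univ.image (ω j))} * n ^ 2 ≤
      k ^ 4 * (n ^ k) ^ e := by
  rcases n.eq_zero_or_pos with rfl | hn
  · simp
  have : Nonempty (Fin n) := ⟨⟨0, hn⟩⟩
  simpa using card_filter_comp_embedding_mul_le_of ⟨_, injective_vecCons₂ hij⟩
    (fun g : Fin 2 → Fin k → Fin n => 1 < #(univ.image (g 0) ∩ univ.image (g 1)))
    (by simpa using card_filter_one_lt_card_inter_mul_le)

lemma card_filter_isBergeTriangle_apply_mul_le {i j l : Fin e} (hij : i ≠ j) (hjl : j ≠ l)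
    (hli : l ≠ i) :
    #{ω : Fin e → Fin k → Fin n |
      IsBergeTriangle (univ.image (ω i)) (univ.image (ω j)) (univ.image (ω l))} * n ^ 3 ≤
      k ^ 6 * (n ^ k) ^ e := by
  rcases n.eq_zero_or_pos with rfl | hn
  · simp
  have : Nonempty (Fin n) := ⟨⟨0, hn⟩⟩
  have := card_filter_comp_embedding_mul_le_of ⟨_, injective_vecCons₃ hij hjl hli⟩
    (fun g : Fin 3 → Fin k → Fin n =>
      IsBergeTriangle (univ.image (g 0)) (univ.image (g 1)) (univ.image (g 2)))
    (by simpa using card_filter_isBergeTriangle_mul_le)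
  simp only [Fintype.card_pi, Fintype.card_fin, prod_const, card_univ] at this
  convert this using 4
  exact Iff.rfl

theorem sum_card_badIndices_mul_le :
    (∑ ω : Fin e → Fin k → Fin n, #(badIndices fun i => univ.image (ω i))) * n ^ 3 ≤
      (e ^ 2 * k ^ 4 * n + e ^ 3 * k ^ 6) * (n ^ k) ^ e := by
  let pairs (ω : Fin e → Fin k → Fin n) : Finset (Fin e × Fin e) :=
    {p ∈ univ.offDiag | 1 < #(univ.image (ω p.1) ∩ univ.image (ω p.2))}
  let T : Finset (Fin e × Fin e × Fin e) :=
    {t | t.1 ≠ t.2.1 ∧ t.2.1 ≠ t.2.2 ∧ t.2.2 ≠ t.1}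
  let triangles (ω : Fin e → Fin k → Fin n) : Finset (Fin e × Fin e × Fin e) :=
    {t ∈ T |
      IsBergeTriangle (univ.image (ω t.1)) (univ.image (ω t.2.1)) (univ.image (ω t.2.2))}
  have hbad : ∀ ω, #(badIndices fun i => univ.image (ω i)) ≤
      #(pairs ω) + #(triangles ω) := by
    intro ω
    refine (card_le_card (t := (pairs ω).image Prod.fst ∪ (triangles ω).image Prod.fst)
      fun i hi => ?_).trans ((card_union_le _ _).trans (add_le_add card_image_le card_image_le))
    rcases mem_badIndices.1 hi with ⟨j, hji, hij⟩ | ⟨j, l, hji, hli, hjl, htri⟩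
    · exact mem_union_left _ (mem_image.2 ⟨(i, j), by simp [pairs, hji.symm, hij], rfl⟩)
    · exact mem_union_right _
        (mem_image.2 ⟨(i, j, l), by simp [triangles, T, hji.symm, hjl, hli, htri], rfl⟩)
  have hpairs : (∑ ω, #(pairs ω)) * n ^ 2 ≤
      #(univ : Finset (Fin e)).offDiag * (k ^ 4 * (n ^ k) ^ e) :=
    sum_card_filter_mul_le _ _
      fun _ hp => card_filter_one_lt_card_inter_apply_mul_le (mem_offDiag.1 hp).2.2
  have htriangles : (∑ ω, #(triangles ω)) * n ^ 3 ≤ #T * (k ^ 6 * (n ^ k) ^ e) :=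
    sum_card_filter_mul_le _ _ fun t ht => by
      simp only [T, mem_filter, mem_univ, true_and] at ht
      exact card_filter_isBergeTriangle_apply_mul_le ht.1 ht.2.1 ht.2.2
  have hoff : #(univ : Finset (Fin e)).offDiag ≤ e ^ 2 := by
    simpa using card_offDiag_univ_le (α := Fin e)
  have hT : #T ≤ e ^ 3 := (card_filter_le _ _).trans_eq (by simp; ring)
  calc (∑ ω : Fin e → Fin k → Fin n, #(badIndices fun i => univ.image (ω i))) * n ^ 3
      ≤ (∑ ω, #(pairs ω)) * n ^ 2 * n + (∑ ω, #(triangles ω)) * n ^ 3 := by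
        rw [mul_assoc, ← pow_succ, ← add_mul, ← sum_add_distrib]
        exact Nat.mul_le_mul_right _ (sum_le_sum fun ω _ => hbad ω)
    _ ≤ #(univ : Finset (Fin e)).offDiag * (k ^ 4 * (n ^ k) ^ e) * n +
        #T * (k ^ 6 * (n ^ k) ^ e) := by gcongr
    _ ≤ e ^ 2 * (k ^ 4 * (n ^ k) ^ e) * n + e ^ 3 * (k ^ 6 * (n ^ k) ^ e) := by gcongr
    _ = (e ^ 2 * k ^ 4 * n + e ^ 3 * k ^ 6) * (n ^ k) ^ e := by ring

lemma descFactorial_le_card_filter_card_image_eq (S : Finset (Fin n)) :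
    (#S).descFactorial k ≤
      #{f : Fin k → Fin n | #(univ.image f) = k ∧ univ.image f ⊆ S} := by
  calc (#S).descFactorial k = #(univ : Finset (Fin k ↪ S)) := by
        rw [card_univ, Fintype.card_embedding_eq, Fintype.card_coe, Fintype.card_fin]
    _ ≤ _ := card_le_card_of_injOn (fun E p => (E p : Fin n))
        (fun E _ => mem_filter.2 ⟨mem_univ _, by
          rw [card_image_of_injective _ fun p q h => E.injective (Subtype.ext h), card_univ,
            Fintype.card_fin],
          image_subset_iff.2 fun p _ => (E p).2⟩)
        fun E _ F _ h => DFunLike.ext E F fun p => Subtype.ext (congrFun h p)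

theorem card_filter_exists_uncovered_le (N : ℕ) :
    #{ω : Fin e → Fin k → Fin n | ∃ S : Finset (Fin n), #S = N ∧
      ∀ i, ¬(#(univ.image (ω i)) = k ∧ univ.image (ω i) ⊆ S)} ≤
      2 ^ n * (n ^ k - N.descFactorial k) ^ e := by
  let C (S : Finset (Fin n)) : Finset (Fin k → Fin n) :=
    {f | ¬(#(univ.image f) = k ∧ univ.image f ⊆ S)}
  have hsub : ({ω | ∃ S : Finset (Fin n), #S = N ∧
      ∀ i, ¬(#(univ.image (ω i)) = k ∧ univ.image (ω i) ⊆ S)} :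
      Finset (Fin e → Fin k → Fin n)) ⊆
      (univ.powersetCard N).biUnion fun S => Fintype.piFinset fun _ => C S := by
    intro ω hω
    obtain ⟨S, hSN, hS⟩ := (mem_filter.1 hω).2
    exact mem_biUnion.2 ⟨S, mem_powersetCard.2 ⟨subset_univ _, hSN⟩,
      Fintype.mem_piFinset.2 fun i => mem_filter.2 ⟨mem_univ _, hS i⟩⟩
  have hC : ∀ S ∈ univ.powersetCard N, #(C S) ≤ n ^ k - N.descFactorial k := fun S hS => by
    rw [← (mem_powersetCard.1 hS).2]
    calc #(C S) = n ^ k - #{f : Fin k → Fin n | #(univ.image f) = k ∧ univ.image f ⊆ S} := by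
          simp only [C, filter_not, card_sdiff_of_subset (filter_subset _ _), card_univ,
            Fintype.card_pi, Fintype.card_fin, prod_const]
      _ ≤ n ^ k - (#S).descFactorial k :=
          Nat.sub_le_sub_left (descFactorial_le_card_filter_card_image_eq S) _
  calc _ ≤ ∑ S ∈ univ.powersetCard N, #(Fintype.piFinset fun _ : Fin e => C S) :=
        (card_le_card hsub).trans card_biUnion_le
    _ ≤ ∑ _S ∈ (univ : Finset (Fin n)).powersetCard N, (n ^ k - N.descFactorial k) ^ e :=
        sum_le_sum fun S hS => by
          rw [Fintype.card_piFinset, prod_const, card_univ, Fintype.card_fin]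
          exact Nat.pow_le_pow_left (hC S hS) e
    _ ≤ 2 ^ n * (n ^ k - N.descFactorial k) ^ e := by
        rw [sum_const, smul_eq_mul, card_powersetCard, card_univ, Fintype.card_fin]
        exact Nat.mul_le_mul_right _ (Nat.choose_le_two_pow n N)

theorem exists_covering_family_with_few_badIndices {N D : ℕ} (hn : 0 < n)
    (hcov : 4 * (2 ^ n * (n ^ k - N.descFactorial k) ^ e) ≤ (n ^ k) ^ e)
    (hbad : 2 * (e ^ 2 * k ^ 4 * n + e ^ 3 * k ^ 6) ≤ (D + 1) * n ^ 3) :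
    ∃ ω : Fin e → Fin k → Fin n,
      (∀ S : Finset (Fin n), #S = N →
        ∃ i, #(univ.image (ω i)) = k ∧ univ.image (ω i) ⊆ S) ∧
      #(badIndices fun i => univ.image (ω i)) ≤ D := by
  let uncovered : Finset (Fin e → Fin k → Fin n) :=
    {ω | ∃ S : Finset (Fin n), #S = N ∧
      ∀ i, ¬(#(univ.image (ω i)) = k ∧ univ.image (ω i) ⊆ S)}
  let tooBad : Finset (Fin e → Fin k → Fin n) :=
    {ω | D + 1 ≤ #(badIndices fun i => univ.image (ω i))}
  have huncovered : 4 * #uncovered ≤ (n ^ k) ^ e :=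
    (Nat.mul_le_mul_left 4 (card_filter_exists_uncovered_le N)).trans hcov
  have htooBad : 2 * #tooBad ≤ (n ^ k) ^ e := by
    have hMarkov : #tooBad * (D + 1) ≤
        ∑ ω : Fin e → Fin k → Fin n, #(badIndices fun i => univ.image (ω i)) := by
      rw [← smul_eq_mul]
      exact (card_nsmul_le_sum _ _ _ fun ω hω => (mem_filter.1 hω).2).trans
        (sum_le_sum_of_subset (subset_univ _))
    refine Nat.le_of_mul_le_mul_right (c := (D + 1) * n ^ 3) ?_ (by positivity)
    calc 2 * #tooBad * ((D + 1) * n ^ 3) = 2 * (#tooBad * (D + 1) * n ^ 3) := by ring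
      _ ≤ 2 * ((e ^ 2 * k ^ 4 * n + e ^ 3 * k ^ 6) * (n ^ k) ^ e) :=
        Nat.mul_le_mul_left 2 ((Nat.mul_le_mul_right _ hMarkov).trans sum_card_badIndices_mul_le)
      _ = 2 * (e ^ 2 * k ^ 4 * n + e ^ 3 * k ^ 6) * (n ^ k) ^ e := by ring
      _ ≤ (D + 1) * n ^ 3 * (n ^ k) ^ e := Nat.mul_le_mul_right _ hbad
      _ = _ := by ring
  have hlt : #(uncovered ∪ tooBad) < #(univ : Finset (Fin e → Fin k → Fin n)) := by
    have : 0 < (n ^ k) ^ e := by positivity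
    have := card_union_le uncovered tooBad
    simp only [card_univ, Fintype.card_pi, Fintype.card_fin, prod_const]
    omega
  obtain ⟨ω, -, hω⟩ := exists_mem_notMem_of_card_lt_card hlt
  simp only [uncovered, tooBad, mem_union, mem_filter, mem_univ, true_and, not_or, not_exists,
    not_and, not_forall, not_not, not_le] at hω
  exact ⟨ω, fun S hS => by simpa using hω.1 S hS, Nat.lt_succ_iff.1 hω.2⟩

end RandomFamilies

section Arithmetic

/-- The proof uses `(1 - 1/Q)^Q ≤ e⁻¹ < 1/2`. -/
lemma two_mul_sub_pow_le {T L Q : ℕ} (hQ : 0 < Q) (h : T ≤ Q * L) :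
    2 * (T - L) ^ Q ≤ T ^ Q := by
  rcases le_total T L with hTL | hLT
  · simp [Nat.sub_eq_zero_of_le hTL, zero_pow hQ.ne']
  have hQr : (0 : ℝ) < Q := by exact_mod_cast hQ
  have hsub : (T : ℝ) - L ≤ T * (1 - 1 / Q) := by
    have hT : (T : ℝ) ≤ Q * L := by exact_mod_cast h
    have : (T : ℝ) / Q ≤ L := by rw [div_le_iff₀ hQr]; linarith
    rw [mul_sub, mul_one, mul_one_div]
    linarith
  have hhalf : (1 - 1 / (Q : ℝ)) ^ Q ≤ 1 / 2 :=
    (Real.one_sub_div_pow_le_exp_neg (by exact_mod_cast hQ)).trans Real.exp_neg_one_lt_half.le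
  have hnonneg : (0 : ℝ) ≤ T - L := by
    have : (L : ℝ) ≤ T := by exact_mod_cast hLT
    linarith
  have key : 2 * ((T : ℝ) - L) ^ Q ≤ (T : ℝ) ^ Q :=
    calc 2 * ((T : ℝ) - L) ^ Q ≤ 2 * (T * (1 - 1 / Q)) ^ Q := by gcongr
      _ = 2 * (1 - 1 / (Q : ℝ)) ^ Q * (T : ℝ) ^ Q := by rw [mul_pow]; ring
      _ ≤ 2 * (1 / 2) * (T : ℝ) ^ Q := by gcongr
      _ = (T : ℝ) ^ Q := by ring
  have : ((2 * (T - L) ^ Q : ℕ) : ℝ) ≤ ((T ^ Q : ℕ) : ℝ) := by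
    push_cast [Nat.cast_sub hLT]
    exact key
  exact_mod_cast this

lemma four_mul_two_pow_mul_sub_pow_le {T L Q m : ℕ} (hQ : 0 < Q) (h : T ≤ Q * L) :
    4 * (2 ^ m * (T - L) ^ (Q * (m + 2))) ≤ T ^ (Q * (m + 2)) :=
  calc 4 * (2 ^ m * (T - L) ^ (Q * (m + 2))) = (2 * (T - L) ^ Q) ^ (m + 2) := by ring
    _ ≤ (T ^ Q) ^ (m + 2) := Nat.pow_le_pow_left (two_mul_sub_pow_le hQ h) _
    _ = T ^ (Q * (m + 2)) := by rw [pow_mul]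

lemma two_mul_expected_bad_le {k n D Q : ℕ} (hQ : 0 < Q) (hk : 0 < k)
    (hn : 192 * Q ^ 3 * k ^ 8 ≤ n) (hD : n < 8 * k ^ 2 * (D + 1)) :
    2 * ((Q * (n + 2)) ^ 2 * k ^ 4 * n + (Q * (n + 2)) ^ 3 * k ^ 6) ≤ (D + 1) * n ^ 3 := by
  have h192 : 192 ≤ n :=
    le_trans (by rw [mul_assoc]; exact Nat.le_mul_of_pos_right 192 (by positivity)) hn
  have hn2 : n + 2 ≤ 2 * n := by omega
  have hDQ : 24 * Q ^ 3 * k ^ 6 < D + 1 := Nat.lt_of_mul_lt_mul_right (a := 8 * k ^ 2) <|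
    calc 24 * Q ^ 3 * k ^ 6 * (8 * k ^ 2) = 192 * Q ^ 3 * k ^ 8 := by ring
      _ ≤ n := hn
      _ < 8 * k ^ 2 * (D + 1) := hD
      _ = (D + 1) * (8 * k ^ 2) := by ring
  have hQk : Q ^ 2 * k ^ 4 ≤ Q ^ 3 * k ^ 6 :=
    Nat.mul_le_mul (Nat.pow_le_pow_right hQ (by norm_num)) (Nat.pow_le_pow_right hk (by norm_num))
  calc 2 * ((Q * (n + 2)) ^ 2 * k ^ 4 * n + (Q * (n + 2)) ^ 3 * k ^ 6)
      ≤ 2 * ((Q * (2 * n)) ^ 2 * k ^ 4 * n + (Q * (2 * n)) ^ 3 * k ^ 6) := by gcongr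
    _ = (8 * (Q ^ 2 * k ^ 4) + 16 * Q ^ 3 * k ^ 6) * n ^ 3 := by ring
    _ ≤ (8 * (Q ^ 3 * k ^ 6) + 16 * Q ^ 3 * k ^ 6) * n ^ 3 := by gcongr
    _ = 24 * Q ^ 3 * k ^ 6 * n ^ 3 := by ring
    _ ≤ (D + 1) * n ^ 3 := by gcongr

lemma budget_le_two_pow {k : ℕ} (hk : 2 ≤ k) :
    192 * ((4 * k) ^ k) ^ 3 * k ^ 8 ≤ 2 ^ (15 * k ^ 2) := by
  have h4k : 4 * k ≤ 2 ^ (k + 2) := by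
    rw [pow_add]
    linarith [(Nat.lt_two_pow_self (n := k)).le]
  calc 192 * ((4 * k) ^ k) ^ 3 * k ^ 8 ≤ 2 ^ 8 * ((2 ^ (k + 2)) ^ k) ^ 3 * (2 ^ k) ^ 8 := by
        gcongr
        · norm_num
        · exact (Nat.lt_two_pow_self).le
    _ = 2 ^ (8 + (k + 2) * k * 3 + k * 8) := by
        rw [← pow_mul, ← pow_mul, ← pow_mul, ← pow_add, ← pow_add]
        ring_nf
    _ ≤ 2 ^ (15 * k ^ 2) := Nat.pow_le_pow_right (by norm_num) (by nlinarith)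

end Arithmetic

theorem exists_tuple_family_of_two_pow_le {k N : ℕ} (hk : 3 ≤ k)
    (hN : 2 ^ (15 * k ^ 2) ≤ 2 * k * N) :
    ∃ (N₀ e : ℕ) (ω : Fin e → Fin k → Fin (2 * k * N)),
      (∀ S : Finset (Fin (2 * k * N)), #S = N₀ →
        ∃ i, #(univ.image (ω i)) = k ∧ univ.image (ω i) ⊆ S) ∧
      N₀ + k * #(badIndices fun i => univ.image (ω i)) ≤ N := by
  set n := 2 * k * N
  set D := N / (4 * k)
  set Q := (4 * k) ^ k
  have hQ : 0 < Q := by positivity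
  have hbudget : 192 * Q ^ 3 * k ^ 8 ≤ n := (budget_le_two_pow (by omega)).trans hN
  have hkN : 4 * k ≤ N := by
    have hk8 : 8 * k ^ 2 ≤ 192 * Q ^ 3 * k ^ 8 := by
      have := Nat.one_le_iff_ne_zero.2 (pow_pos hQ 3).ne'
      have := Nat.pow_le_pow_right (by omega : 0 < k) (by norm_num : 2 ≤ 8)
      nlinarith
    refine Nat.le_of_mul_le_mul_left (c := 2 * k) ?_ (by omega)
    calc 2 * k * (4 * k) = 8 * k ^ 2 := by ring
      _ ≤ 2 * k * N := hk8.trans hbudget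
  have hkD : 4 * (k * D) ≤ N := by rw [← mul_assoc]; exact Nat.mul_div_le N (4 * k)
  have hDlt : n < 8 * k ^ 2 * (D + 1) :=
    calc n = 2 * k * N := rfl
      _ < 2 * k * (4 * k * (D + 1)) :=
        Nat.mul_lt_mul_of_pos_left (Nat.lt_mul_div_succ N (by omega)) (by omega)
      _ = 8 * k ^ 2 * (D + 1) := by ring
  have hcover : n ^ k ≤ Q * (N - k * D).descFactorial k := by
    have : n ≤ 4 * k * (N - k * D + 1 - k) :=
      calc n = 2 * k * N := rfl
        _ ≤ 2 * k * (2 * (N - k * D + 1 - k)) := Nat.mul_le_mul_left _ (by omega)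
        _ = 4 * k * (N - k * D + 1 - k) := by ring
    calc n ^ k ≤ (4 * k * (N - k * D + 1 - k)) ^ k := Nat.pow_le_pow_left this k
      _ ≤ Q * (N - k * D).descFactorial k := by
        rw [mul_pow]
        exact Nat.mul_le_mul_left _ (Nat.pow_sub_le_descFactorial _ k)
  obtain ⟨ω, hcov, hbad⟩ := exists_covering_family_with_few_badIndices (e := Q * (n + 2))
    (Nat.mul_pos (by omega) (by omega)) (four_mul_two_pow_mul_sub_pow_le hQ hcover)
    (two_mul_expected_bad_le hQ (by omega) hbudget hDlt)
  have := Nat.mul_le_mul_left k hbad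
  exact ⟨N - k * D, Q * (n + 2), ω, hcov, by omega⟩

/-- For every `k ≥ 3` and every `n ≥ 2^(15k²)` divisible by `2k`, there exist `m ≥ 3n/4` and a
graph `G` on `m` vertices with no clique of size `k+1` such that every set of `⌈n/(2k)⌉`
vertices of `G` contains a clique of size `k`. -/
theorem exists_cliquefree_graph_rich_in_cliques (k n : ℕ) (hk : 3 ≤ k)
    (hn : 2 ^ (15 * k ^ 2) ≤ n) (hdvd : 2 * k ∣ n) :
    ∃ m : ℕ, (3 * (n : ℚ)) / 4 ≤ (m : ℚ) ∧
      ∃ G : SimpleGraph (Fin m),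
        G.CliqueFree (k + 1) ∧
        ∀ U : Finset (Fin m), U.card = ⌈(n : ℚ) / (2 * (k : ℚ))⌉₊ →
          ∃ S ⊆ U, G.IsNClique k S := by
  obtain ⟨N, rfl⟩ := hdvd
  obtain ⟨N₀, e, ω, hcov, hbad⟩ := exists_tuple_family_of_two_pow_le hk hn
  have hs : ∀ i, #(univ.image (ω i)) ≤ k := fun i => card_image_le.trans (by simp)
  refine ⟨2 * k * N, by linarith [(Nat.cast_nonneg _ : (0 : ℚ) ≤ ((2 * k * N : ℕ) : ℚ))],
    SimpleGraph.trimmedCliqueUnion fun i => univ.image (ω i),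
    SimpleGraph.cliqueFree_trimmedCliqueUnion (by omega) hs, fun U hU => ?_⟩
  have hUN : #U = N := by
    rw [hU, show ((2 * k * N : ℕ) : ℚ) / (2 * k) = N by field_simp; push_cast; ring,
      Nat.ceil_natCast]
  exact SimpleGraph.exists_isNClique_trimmedCliqueUnion hs hcov (hUN.symm ▸ hbad)
end

section
/- For every integer k ≥ 3 and every integer n ≥ 2^{15k²}, with p = 20·n^{-2/k} one has ∑_{i=2}^{k-1} \binom{n}{i}\binom{n-i}{k-i}\binom{n-k}{k-i}·p^{k(k-1)-\binom{i}{2}} ≤ k·20^{k²}·n^{2/k}. (This sum is the quantity Δ = ∑ Pr[B_S ∩ B_T] over ordered pairs of k-element vertex subsets S, T with |S ∩ T| ≥ 2, where B_S is the event that S is a clique in G(n,p).) -/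
/-!
Every summand is bounded by `20 ^ (k ^ 2) * n ^ (2 / k)`: the binomial product is at most
`n ^ (2k - i)`, and the resulting power of `n` has exponent
`2k - i - (2/k) (k(k-1) - i(i-1)/2) = 2/k + (i - 2)(i - (k - 1))/k ≤ 2/k` for `2 ≤ i ≤ k - 1`.
There are at most `k` summands.
-/

open Finset

lemma choose_mul_choose_mul_choose_le_pow {n k i : ℕ} (hik : i ≤ k) :
    n.choose i * (n - i).choose (k - i) * (n - k).choose (k - i) ≤ n ^ (2 * k - i) := by
  calc n.choose i * (n - i).choose (k - i) * (n - k).choose (k - i)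
      ≤ n ^ i * (n - i) ^ (k - i) * (n - k) ^ (k - i) := by
        gcongr <;> exact Nat.choose_le_pow _ _
    _ ≤ n ^ i * n ^ (k - i) * n ^ (k - i) := by gcongr <;> exact Nat.sub_le _ _
    _ = n ^ (2 * k - i) := by rw [← pow_add, ← pow_add]; congr 1; omega

lemma two_mul_sub_sub_div_mul_le {k i : ℝ} (hk : 0 < k) (hi : 2 ≤ i) (hik : i ≤ k - 1) :
    2 * k - i + -2 / k * (k * (k - 1) - i * (i - 1) / 2) ≤ 2 / k := by
  have hfactor : (i - 2) * (i - (k - 1)) ≤ 0 :=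
    mul_nonpos_of_nonneg_of_nonpos (by linarith) (by linarith)
  rw [← sub_nonneg]
  have hk' : k ≠ 0 := hk.ne'
  field_simp
  nlinarith

lemma pow_mul_rpow_pow_le {n k i : ℕ} (hi : 2 ≤ i) (hik : i ≤ k - 1) :
    (n : ℝ) ^ (2 * k - i) * (20 * (n : ℝ) ^ (-(2 : ℝ) / k)) ^ (k * (k - 1) - i.choose 2)
      ≤ 20 ^ (k ^ 2) * (n : ℝ) ^ ((2 : ℝ) / k) := by
  rcases Nat.eq_zero_or_pos n with rfl | hn
  · rw [Nat.cast_zero, zero_pow (by omega), zero_mul]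
    positivity
  have hchoose : i.choose 2 ≤ k * (k - 1) :=
    (Nat.choose_le_pow i 2).trans (by rw [sq, mul_comm k]; gcongr; omega)
  have hN : (1 : ℝ) ≤ n := by exact_mod_cast hn
  have hk : (0 : ℝ) < k := by exact_mod_cast (by omega : 0 < k)
  have hik' : (i : ℝ) + 1 ≤ k := by exact_mod_cast (by omega : i + 1 ≤ k)
  have hexp : ((2 * k - i : ℕ) : ℝ) + -2 / k * ((k * (k - 1) - i.choose 2 : ℕ) : ℝ)
      ≤ 2 / k := by
    rw [Nat.cast_sub hchoose, Nat.cast_choose_two, Nat.cast_sub (by omega : i ≤ 2 * k)]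
    push_cast [Nat.cast_sub (by omega : 1 ≤ k)]
    exact two_mul_sub_sub_div_mul_le hk (by exact_mod_cast hi) (by linarith)
  calc (n : ℝ) ^ (2 * k - i) * (20 * (n : ℝ) ^ (-(2 : ℝ) / k)) ^ (k * (k - 1) - i.choose 2)
      = 20 ^ (k * (k - 1) - i.choose 2) * (n : ℝ) ^ (((2 * k - i : ℕ) : ℝ)
          + -2 / k * ((k * (k - 1) - i.choose 2 : ℕ) : ℝ)) := by
        rw [Real.rpow_add (by positivity), ← Real.rpow_natCast (n : ℝ) (2 * k - i),
          Real.rpow_mul (by positivity), mul_pow]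
        simp only [Real.rpow_natCast]
        ring
    _ ≤ 20 ^ (k ^ 2) * (n : ℝ) ^ ((2 : ℝ) / k) := by
        gcongr
        · norm_num
        · exact (Nat.sub_le _ _).trans (by rw [sq]; gcongr; omega)

theorem delta_le_general (k n : ℕ) :
    ∑ i ∈ Finset.Icc 2 (k - 1),
      ((n.choose i * (n - i).choose (k - i) * (n - k).choose (k - i) : ℕ) : ℝ) *
        (20 * (n : ℝ) ^ (-(2 : ℝ) / (k : ℝ))) ^ (k * (k - 1) - i.choose 2)
      ≤ (k : ℝ) * 20 ^ (k ^ 2) * (n : ℝ) ^ ((2 : ℝ) / (k : ℝ)) := by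
  have hterm : ∀ i ∈ Icc 2 (k - 1),
      ((n.choose i * (n - i).choose (k - i) * (n - k).choose (k - i) : ℕ) : ℝ) *
        (20 * (n : ℝ) ^ (-(2 : ℝ) / k)) ^ (k * (k - 1) - i.choose 2)
      ≤ 20 ^ (k ^ 2) * (n : ℝ) ^ ((2 : ℝ) / k) := by
    intro i hi
    obtain ⟨hi2, hik⟩ := mem_Icc.mp hi
    refine le_trans ?_ (pow_mul_rpow_pow_le hi2 hik)
    gcongr
    exact_mod_cast choose_mul_choose_mul_choose_le_pow (by omega)
  calc _ ≤ ∑ _i ∈ Icc 2 (k - 1), (20 : ℝ) ^ (k ^ 2) * (n : ℝ) ^ ((2 : ℝ) / k) :=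
        sum_le_sum hterm
    _ ≤ (k : ℝ) * 20 ^ (k ^ 2) * (n : ℝ) ^ ((2 : ℝ) / k) := by
        rw [sum_const, nsmul_eq_mul, Nat.card_Icc, mul_assoc]
        gcongr
        exact_mod_cast (by omega : k - 1 + 1 - 2 ≤ k)

/-- For `k ≥ 3`, `n ≥ 2^(15k²)` and `p = 20 n^(-2/k)`, the quantity
`Δ = ∑_{i=2}^{k-1} C(n,i) C(n-i,k-i) C(n-k,k-i) p^(k(k-1) - C(i,2))`
is at most `k · 20^(k²) · n^(2/k)`. -/
theorem delta_le (k n : ℕ) (hk : 3 ≤ k) (hn : 2 ^ (15 * k ^ 2) ≤ n) :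
    ∑ i ∈ Finset.Icc 2 (k - 1),
      ((n.choose i * (n - i).choose (k - i) * (n - k).choose (k - i) : ℕ) : ℝ) *
        (20 * (n : ℝ) ^ (-(2 : ℝ) / (k : ℝ))) ^ (k * (k - 1) - i.choose 2)
      ≤ (k : ℝ) * 20 ^ (k ^ 2) * (n : ℝ) ^ ((2 : ℝ) / (k : ℝ)) :=
  delta_le_general k n
end
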